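/- arXiv:1511.08826 — 5 statements merged into one kernel-verified Lean document; each statement's English description precedes it below -/
import Mathlib

section
/- Let t ≥ 3 be an integer, let G be a finite simple graph containing no cycle whose length lies in {8, 10, 12, …, 2t+2}, and let x be a vertex of G. Then G contains no path v₀v₁v₂v₃v₄v₅v₆ of length 6 (seven distinct vertices, consecutive ones adjacent) such that v₀, v₂, v₄, v₆ are all at distance exactly t−1 from x and each of v₁, v₃, v₅ is at distance exactly t−1 or exactly t from x. -/
/-!
Write `n = t - 1`. If `a ≠ b` lie at distance `n` from `x` and are joined by a path `M` all of
whose vertices are at distance `≥ n`, pick a vertex `w` from which geodesics to `a` and `b` of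
the same length `m` (with `d(x, w) + m = n`) meet only in `w`. These two geodesics and `M` form a
cycle of length `2m + |M|`; when `|M| = 4` the excluded lengths force `m = 1`, so `a` and `b`
have a common neighbour at distance `n - 1` from `x`.

Applied to `v₀ … v₄` and to `v₂ … v₆` this gives `c ~ v₀, v₄` and `d ~ v₂, v₆` outside the path.
Then `c v₀ v₁ … v₆ c` (if `c = d`) or `c v₀ v₁ v₂ d v₆ v₅ v₄ c` (if `c ≠ d`) is an 8-cycle,
and `8 ≤ 2t + 2` because `t ≥ 3`.
-/

open SimpleGraph Walk

namespace SimpleGraph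

variable {V : Type*} {G : SimpleGraph V}

namespace Walk

theorem isCycle_append_append {u v w : V} {p : G.Walk u v} {q : G.Walk v w} {r : G.Walk w u}
    (hp : p.IsPath) (hq : q.IsPath) (hr : r.IsPath)
    (hpq : ∀ z ∈ p.support, z ∈ q.support → z = v)
    (hqr : ∀ z ∈ q.support, z ∈ r.support → z = w)
    (hrp : ∀ z ∈ r.support, z ∈ p.support → z = u)
    (hlen : 3 ≤ p.length + q.length + r.length) :
    (p.append (q.append r)).IsCycle := by
  have hnil : ¬(p.append (q.append r)).Nil := fun h => by
    simp only [← length_eq_zero_iff, length_append] at h; omega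
  rw [isCycle_iff_isPath_tail_and_le_length, isPath_def, support_tail_of_not_nil _ hnil,
    tail_support_append, tail_support_append]
  refine ⟨?_, by simp only [length_append]; omega⟩
  have hp' := hp.support_nodup
  have hq' := hq.support_nodup
  have hr' := hr.support_nodup
  rw [← cons_tail_support] at hp' hq' hr'
  rw [List.nodup_cons] at hp' hq' hr'
  simp only [List.nodup_append]
  refine ⟨hp'.2, ⟨hq'.2, hr'.2, ?_⟩, ?_⟩
  · rintro z hzq _ hzr rfl
    exact hr'.1 (hqr z (List.mem_of_mem_tail hzq) (List.mem_of_mem_tail hzr) ▸ hzr)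
  · rintro z hzp _ hzqr rfl
    rcases List.mem_append.mp hzqr with hzq | hzr
    · exact hq'.1 (hpq z (List.mem_of_mem_tail hzp) (List.mem_of_mem_tail hzq) ▸ hzq)
    · exact hp'.1 (hrp z (List.mem_of_mem_tail hzr) (List.mem_of_mem_tail hzp) ▸ hzp)

theorem length_takeUntil_add_length_dropUntil [DecidableEq V] {u v z : V} (p : G.Walk u v)
    (hz : z ∈ p.support) : (p.takeUntil z hz).length + (p.dropUntil z hz).length = p.length := by
  rw [← length_append, take_spec]

theorem dist_eq_add_length_takeUntil [DecidableEq V] {x u v z : V} (hxu : G.Reachable x u)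
    {p : G.Walk u v} (hp : G.dist x v = G.dist x u + p.length) (hz : z ∈ p.support) :
    G.dist x z = G.dist x u + (p.takeUntil z hz).length := by
  have := p.length_takeUntil_add_length_dropUntil hz
  have := hxu.dist_triangle_left z
  have := dist_le (p.takeUntil z hz)
  have := (hxu.trans (p.takeUntil z hz).reachable).dist_triangle_left v
  have := dist_le (p.dropUntil z hz)
  omega

theorem eq_of_dist_le_of_dist_eq_add_length [DecidableEq V] {x u v z : V} (hxu : G.Reachable x u)
    {p : G.Walk u v} (hp : G.dist x v = G.dist x u + p.length) (hz : z ∈ p.support)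
    (hzv : G.dist x v ≤ G.dist x z) : z = v := by
  have := dist_eq_add_length_takeUntil hxu hp hz
  have := p.length_takeUntil_add_length_dropUntil hz
  exact eq_of_length_eq_zero (p := p.dropUntil z hz) (by omega)

theorem isPath_of_dist_eq_add_length {x u v : V} (hxu : G.Reachable x u) {p : G.Walk u v}
    (hp : G.dist x v = G.dist x u + p.length) : p.IsPath := by
  have := hxu.dist_triangle_left v
  have := dist_le p
  exact isPath_of_length_eq_dist p (by omega)

end Walk

theorem exists_adj_adj_of_isPath_of_le_dist {x a b : V} {n : ℕ} {M : G.Walk a b} (hM : M.IsPath)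
    (hab : a ≠ b) (hxa : G.Reachable x a) (ha : G.dist x a = n) (hb : G.dist x b = n)
    (hMn : ∀ z ∈ M.support, n ≤ G.dist x z)
    (hcyc : ∀ m, 2 ≤ m → m ≤ n → ∀ u (C : G.Walk u u), C.IsCycle → C.length ≠ 2 * m + M.length) :
    ∃ c, G.Adj c a ∧ G.Adj c b ∧ G.dist x c + 1 = n := by
  classical
  suffices key : ∀ m w (p : G.Walk w a) (q : G.Walk w b), G.Reachable x w → p.length = m →
      q.length = m → G.dist x w + m = n → ∃ c, G.Adj c a ∧ G.Adj c b ∧ G.dist x c + 1 = n by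
    obtain ⟨p, hp⟩ := hxa.exists_walk_length_eq_dist
    obtain ⟨q, hq⟩ := (hxa.trans M.reachable).exists_walk_length_eq_dist
    exact key n x p q .rfl (hp.trans ha) (hq.trans hb) (by simp)
  -- Starting from `w = x`, a second meeting point of the two geodesics lets us restart from it
  -- with a smaller `m`.
  intro m
  induction m using Nat.strong_induction_on with
  | _ m ih =>
  intro w p q hxw hpm hqm hwn
  have hp : G.dist x a = G.dist x w + p.length := by omega
  have hq : G.dist x b = G.dist x w + q.length := by omega
  by_cases hdisj : ∀ z ∈ p.support, z ∈ q.support → z = w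
  · have hpath := isPath_of_dist_eq_add_length hxw hp
    have hqpath := isPath_of_dist_eq_add_length hxw hq
    have hMlen : M.length ≠ 0 := fun h => hab (eq_of_length_eq_zero h)
    have hm : m ≠ 0 := fun h => hab ((eq_of_length_eq_zero (hpm.trans h)).symm.trans
      (eq_of_length_eq_zero (hqm.trans h)))
    have hC := isCycle_append_append hpath hM hqpath.reverse
      (fun z hzp hzM => eq_of_dist_le_of_dist_eq_add_length hxw hp hzp (ha ▸ hMn z hzM))
      (fun z hzM hzq => eq_of_dist_le_of_dist_eq_add_length hxw hq
        (by simpa using hzq) (hb ▸ hMn z hzM))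
      (fun z hzq hzp => hdisj z hzp (by simpa using hzq))
      (by simp only [length_reverse]; omega)
    have hm1 : m = 1 := by
      by_contra
      exact hcyc m (by omega) (by omega) w _ hC
        (by simp only [length_append, length_reverse]; omega)
    exact ⟨w, adj_of_length_eq_one (hpm.trans hm1), adj_of_length_eq_one (hqm.trans hm1), by omega⟩
  push Not at hdisj
  obtain ⟨z, hzp, hzq, hzw⟩ := hdisj
  have := dist_eq_add_length_takeUntil hxw hp hzp
  have := dist_eq_add_length_takeUntil hxw hq hzq
  have := p.length_takeUntil_add_length_dropUntil hzp
  have := q.length_takeUntil_add_length_dropUntil hzq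
  have : (p.takeUntil z hzp).length ≠ 0 := fun h => hzw (eq_of_length_eq_zero h).symm
  exact ih _ (by omega) z (p.dropUntil z hzp) (q.dropUntil z hzq)
    (hxw.trans (p.takeUntil z hzp).reachable) rfl (by omega) (by omega)

theorem exists_adj_adj_of_path₄ {x a u c v b : V} {n : ℕ} (hn : n ≠ 0)
    (hcyc : ∀ m, 2 ≤ m → m ≤ n → ∀ y (C : G.Walk y y), C.IsCycle → C.length ≠ 2 * m + 4)
    (hnd : [a, u, c, v, b].Nodup) (hau : G.Adj a u) (huc : G.Adj u c) (hcv : G.Adj c v)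
    (hvb : G.Adj v b) (ha : G.dist x a = n) (hu : n ≤ G.dist x u) (hc : n ≤ G.dist x c)
    (hv : n ≤ G.dist x v) (hb : G.dist x b = n) :
    ∃ w, G.Adj w a ∧ G.Adj w b ∧ G.dist x w + 1 = n := by
  refine exists_adj_adj_of_isPath_of_le_dist
    (M := .cons hau (.cons huc (.cons hcv (.cons hvb .nil)))) (by simpa [isPath_def] using hnd)
    (fun hab => (List.nodup_cons.mp hnd).1 (by simp [hab])) (Reachable.of_dist_ne_zero (ha ▸ hn))
    ha hb ?_ hcyc
  simp only [support_cons, support_nil, List.mem_cons, List.not_mem_nil, or_false]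
  rintro z (rfl | rfl | rfl | rfl | rfl) <;> omega

theorem exists_isCycle_length_eight {v₀ v₁ v₂ v₃ v₄ v₅ v₆ c d : V}
    (hnd : [v₀, v₁, v₂, v₃, v₄, v₅, v₆].Nodup) (hc : c ∉ [v₀, v₁, v₂, v₃, v₄, v₅, v₆])
    (hd : d ∉ [v₀, v₁, v₂, v₃, v₄, v₅, v₆]) (h₀₁ : G.Adj v₀ v₁) (h₁₂ : G.Adj v₁ v₂)
    (h₂₃ : G.Adj v₂ v₃) (h₃₄ : G.Adj v₃ v₄) (h₄₅ : G.Adj v₄ v₅) (h₅₆ : G.Adj v₅ v₆)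
    (hc₀ : G.Adj c v₀) (hc₄ : G.Adj c v₄) (hd₂ : G.Adj d v₂) (hd₆ : G.Adj d v₆) :
    ∃ y, ∃ C : G.Walk y y, C.IsCycle ∧ C.length = 8 := by
  simp only [List.nodup_cons, List.mem_cons, List.not_mem_nil, or_false, not_or,
    List.nodup_nil] at hnd hc hd
  by_cases hcd : c = d
  · subst hcd
    refine ⟨c, .cons hc₀ (.cons h₀₁ (.cons h₁₂ (.cons h₂₃ (.cons h₃₄ (.cons h₄₅ (.cons h₅₆
      (.cons hd₆.symm .nil))))))), ?_, rfl⟩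
    simp only [isCycle_iff_isPath_tail_and_le_length, getVert_cons_succ, tail_cons, isPath_def,
      support_copy, support_cons, support_nil, List.nodup_cons, List.mem_cons, List.not_mem_nil,
      or_false, not_or, not_false_eq_true, List.nodup_nil, and_self, and_true, length_cons,
      length_nil, zero_add, Nat.reduceAdd, Nat.reduceLeDiff]
    tauto
  · refine ⟨c, .cons hc₀ (.cons h₀₁ (.cons h₁₂ (.cons hd₂.symm (.cons hd₆ (.cons h₅₆.symm
      (.cons h₄₅.symm (.cons hc₄.symm .nil))))))), ?_, rfl⟩
    simp only [isCycle_iff_isPath_tail_and_le_length, getVert_cons_succ, tail_cons, isPath_def,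
      support_copy, support_cons, support_nil, List.nodup_cons, List.mem_cons, List.not_mem_nil,
      or_false, not_or, not_false_eq_true, List.nodup_nil, and_self, and_true, length_cons,
      length_nil, zero_add, Nat.reduceAdd, Nat.reduceLeDiff]
    tauto

end SimpleGraph

theorem no_sixpath_at_level_t_minus_one_general
    (t : ℕ) (ht : 3 ≤ t) (V : Type) (G : SimpleGraph V)
    (hcyc : ∀ (v : V) (w : G.Walk v v), w.IsCycle →
      ¬(8 ≤ w.length ∧ w.length ≤ 2 * t + 2 ∧ Even w.length))
    (x : V) :
    ¬ ∃ v₀ v₁ v₂ v₃ v₄ v₅ v₆ : V,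
      ([v₀, v₁, v₂, v₃, v₄, v₅, v₆] : List V).Nodup ∧
      G.Adj v₀ v₁ ∧ G.Adj v₁ v₂ ∧ G.Adj v₂ v₃ ∧ G.Adj v₃ v₄ ∧ G.Adj v₄ v₅ ∧ G.Adj v₅ v₆ ∧
      G.dist x v₀ = t - 1 ∧ G.dist x v₂ = t - 1 ∧ G.dist x v₄ = t - 1 ∧ G.dist x v₆ = t - 1 ∧
      (G.dist x v₁ = t - 1 ∨ G.dist x v₁ = t) ∧
      (G.dist x v₃ = t - 1 ∨ G.dist x v₃ = t) ∧
      (G.dist x v₅ = t - 1 ∨ G.dist x v₅ = t) := by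
  rintro ⟨v₀, v₁, v₂, v₃, v₄, v₅, v₆, hnd, h₀₁, h₁₂, h₂₃, h₃₄, h₄₅, h₅₆,
    hv₀, hv₂, hv₄, hv₆, hv₁, hv₃, hv₅⟩
  have hcyc' : ∀ m, 2 ≤ m → m ≤ t - 1 → ∀ y (C : G.Walk y y), C.IsCycle → C.length ≠ 2 * m + 4 :=
    fun m hm₂ hmt y C hC hlen => hcyc y C hC ⟨by omega, by omega, hlen ▸ ⟨m + 2, by ring⟩⟩
  obtain ⟨c, hc₀, hc₄, hc⟩ := exists_adj_adj_of_path₄ (by omega) hcyc'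
    (hnd.sublist (by simp)) h₀₁ h₁₂ h₂₃ h₃₄ hv₀ (by omega) (by omega) (by omega) hv₄
  obtain ⟨d, hd₂, hd₆, hd⟩ := exists_adj_adj_of_path₄ (by omega) hcyc'
    (hnd.sublist (by simp)) h₂₃ h₃₄ h₄₅ h₅₆ hv₂ (by omega) (by omega) (by omega) hv₆
  have hlow : ∀ z, G.dist x z + 1 = t - 1 → z ∉ [v₀, v₁, v₂, v₃, v₄, v₅, v₆] := by
    simp only [List.mem_cons, List.not_mem_nil, or_false]
    rintro z hz (rfl | rfl | rfl | rfl | rfl | rfl | rfl) <;> omega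
  obtain ⟨y, C, hC, hlen⟩ := exists_isCycle_length_eight hnd (hlow c hc) (hlow d hd)
    h₀₁ h₁₂ h₂₃ h₃₄ h₄₅ h₅₆ hc₀ hc₄ hd₂ hd₆
  exact hcyc y C hC ⟨by omega, by omega, hlen ▸ even_two_mul 4⟩

/-- Claim 1: if `t ≥ 3` and `G` has no cycle of length in `{8, 10, ..., 2t+2}`, then `G`
contains no path `v₀v₁v₂v₃v₄v₅v₆` with `v₀, v₂, v₄, v₆` at distance exactly `t-1` from `x`
and `v₁, v₃, v₅` at distance exactly `t-1` or `t` from `x`. -/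
theorem no_sixpath_at_level_t_minus_one
    (t : ℕ) (ht : 3 ≤ t) (V : Type) [Fintype V] (G : SimpleGraph V)
    (hcyc : ∀ (v : V) (w : G.Walk v v), w.IsCycle →
      ¬(8 ≤ w.length ∧ w.length ≤ 2 * t + 2 ∧ Even w.length))
    (x : V) :
    ¬ ∃ v₀ v₁ v₂ v₃ v₄ v₅ v₆ : V,
      ([v₀, v₁, v₂, v₃, v₄, v₅, v₆] : List V).Nodup ∧
      G.Adj v₀ v₁ ∧ G.Adj v₁ v₂ ∧ G.Adj v₂ v₃ ∧ G.Adj v₃ v₄ ∧ G.Adj v₄ v₅ ∧ G.Adj v₅ v₆ ∧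
      G.dist x v₀ = t - 1 ∧ G.dist x v₂ = t - 1 ∧ G.dist x v₄ = t - 1 ∧ G.dist x v₆ = t - 1 ∧
      (G.dist x v₁ = t - 1 ∨ G.dist x v₁ = t) ∧
      (G.dist x v₃ = t - 1 ∨ G.dist x v₃ = t) ∧
      (G.dist x v₅ = t - 1 ∨ G.dist x v₅ = t) :=
  no_sixpath_at_level_t_minus_one_general t ht V G hcyc x
end

section
/- Let t ≥ 3 be an integer, let G be a finite simple graph containing no cycle whose length lies in {8, 10, 12, …, 2t+2}, and let x be a vertex of G. Then G contains no path v₀v₁v₂v₃v₄v₅v₆ of length 6 (seven distinct vertices, consecutive ones adjacent) such that v₀, v₂, v₄, v₆ are all at distance exactly t from x and each of v₁, v₃, v₅ is at distance exactly t or exactly t+1 from x. -/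
/-!
Fix a breadth-first search tree rooted at `x`. If `v ≠ w` lie at level `t`, are joined by a path
`Q` that stays at levels `≥ t`, and their tree branches first meet `k` levels up, then `Q` and the
two branches form a cycle of length `2k + |Q|`. As no even cycle has length in `[8, 2t + 2]`,
consecutive even vertices `v₀, v₂, v₄, v₆` of the path meet within two levels; hence `v₀, v₄` have
a common parent `b` and `v₂, v₆` a common parent `c`, and `b ≠ c` because `v₀, v₆` cannot meet one
level up. Then `v₀ v₁ v₂ c v₆ v₅ v₄ b` is a cycle of length `8 ≤ 2t + 2`.
-/

lemma Function.iterate_eq_iterate_of_le {α : Type*} {f : α → α} {a b : α} {k j : ℕ}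
    (h : f^[k] a = f^[k] b) (hkj : k ≤ j) : f^[j] a = f^[j] b := by
  obtain ⟨d, rfl⟩ := Nat.exists_eq_add_of_le hkj
  rw [add_comm, Function.iterate_add_apply, Function.iterate_add_apply, h]

namespace SimpleGraph

variable {V : Type*} {G : SimpleGraph V} {x u v w : V}

lemma Walk.IsPath.append_of_disjoint {p : G.Walk u v} {q : G.Walk v w} (hp : p.IsPath)
    (hq : q.IsPath) (h : p.support.Disjoint q.support.tail) : (p.append q).IsPath :=
  .mk' <| by
    rw [Walk.support_append, List.nodup_append']
    exact ⟨hp.support_nodup, hq.support_nodup.tail, h⟩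

lemma exists_adj_dist_add_one_eq (hv : 0 < G.dist x v) :
    ∃ u, G.Adj u v ∧ G.dist x u + 1 = G.dist x v := by
  obtain ⟨p, hp⟩ := exists_walk_of_dist_ne_zero hv.ne'
  have hnil : ¬p.Nil := Walk.not_nil_iff_lt_length.mpr (by omega)
  have hadj := p.adj_penultimate hnil
  have hle := dist_le p.dropLast
  have hge := p.dropLast.reachable.dist_triangle_left v
  rw [Walk.length_dropLast] at hle
  rw [dist_eq_one_iff_adj.mpr hadj] at hge
  exact ⟨p.penultimate, hadj, by omega⟩

open Classical in
/-- A parent of `v` in a breadth-first search tree rooted at `x`. Vertices at distance `0` from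
`x` (`x` itself and the vertices it cannot reach) are their own parents. -/
noncomputable def bfsParent (G : SimpleGraph V) (x v : V) : V :=
  if h : ∃ u, G.Adj u v ∧ G.dist x u + 1 = G.dist x v then h.choose else v

lemma bfsParent_adj (hv : 0 < G.dist x v) : G.Adj (G.bfsParent x v) v := by
  have h := exists_adj_dist_add_one_eq hv
  rw [bfsParent, dif_pos h]
  exact h.choose_spec.1

lemma bfsParent_eq_self (hv : G.dist x v = 0) : G.bfsParent x v = v :=
  dif_neg fun ⟨_, _, hu⟩ => by omega

lemma dist_bfsParent (v : V) : G.dist x (G.bfsParent x v) = G.dist x v - 1 := by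
  rcases Nat.eq_zero_or_pos (G.dist x v) with hv | hv
  · rw [bfsParent_eq_self hv, hv]
  · have h := exists_adj_dist_add_one_eq hv
    rw [bfsParent, dif_pos h]
    have := h.choose_spec.2
    omega

lemma reachable_bfsParent (v : V) : G.Reachable (G.bfsParent x v) v := by
  rcases Nat.eq_zero_or_pos (G.dist x v) with hv | hv
  · rw [bfsParent_eq_self hv]
  · exact (bfsParent_adj hv).reachable

lemma dist_bfsParent_iterate (k : ℕ) (v : V) :
    G.dist x ((G.bfsParent x)^[k] v) = G.dist x v - k := by
  induction k with
  | zero => rfl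
  | succ k ih => rw [Function.iterate_succ_apply', dist_bfsParent, ih, Nat.sub_sub]

lemma reachable_bfsParent_iterate (k : ℕ) (v : V) :
    G.Reachable ((G.bfsParent x)^[k] v) v := by
  induction k with
  | zero => rfl
  | succ k ih => rw [Function.iterate_succ_apply']; exact (reachable_bfsParent _).trans ih

lemma bfsParent_iterate_dist (hv : G.Reachable x v) : (G.bfsParent x)^[G.dist x v] v = x := by
  have hr := hv.trans (reachable_bfsParent_iterate (x := x) (G.dist x v) v).symm
  refine (hr.dist_eq_zero_iff.mp ?_).symm
  rw [dist_bfsParent_iterate, Nat.sub_self]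

lemma eq_of_bfsParent_iterate_eq {i j : ℕ} (hd : G.dist x v = G.dist x w) (hi : i ≤ G.dist x v)
    (hj : j ≤ G.dist x w) (h : (G.bfsParent x)^[i] v = (G.bfsParent x)^[j] w) : i = j := by
  have := congrArg (G.dist x) h
  rw [dist_bfsParent_iterate, dist_bfsParent_iterate] at this
  omega

lemma exists_isPath_bfsParent_iterate (v : V) {k : ℕ} (hk : k ≤ G.dist x v) :
    ∃ p : G.Walk ((G.bfsParent x)^[k] v) v, p.IsPath ∧ p.length = k ∧
      ∀ u ∈ p.support, ∃ i ≤ k, u = (G.bfsParent x)^[i] v := by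
  induction k with
  | zero => exact ⟨.nil, .nil, rfl, fun u hu => ⟨0, le_rfl, by simpa using hu⟩⟩
  | succ k ih =>
    obtain ⟨p, hp, hpl, hps⟩ := ih (by omega)
    have hadj : G.Adj ((G.bfsParent x)^[k + 1] v) ((G.bfsParent x)^[k] v) := by
      rw [Function.iterate_succ_apply']
      exact bfsParent_adj (by rw [dist_bfsParent_iterate]; omega)
    refine ⟨.cons hadj p, hp.cons fun hmem => ?_, by rw [Walk.length_cons, hpl], ?_⟩
    · obtain ⟨i, hi, he⟩ := hps _ hmem
      have := eq_of_bfsParent_iterate_eq rfl hk (by omega) he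
      omega
    · simp only [Walk.support_cons, List.mem_cons]
      rintro u (rfl | hu)
      · exact ⟨k + 1, le_rfl, rfl⟩
      · obtain ⟨i, hi, rfl⟩ := hps u hu
        exact ⟨i, by omega, rfl⟩

lemma Walk.IsPath.start_notMem_support_tail {p : G.Walk u v} (hp : p.IsPath) :
    u ∉ p.support.tail :=
  (List.nodup_cons.mp (p.cons_tail_support ▸ hp.support_nodup)).1

lemma exists_isPath_bfsParent_iterate_of_eq {k : ℕ} (hd : G.dist x v = G.dist x w)
    (hk : k ≤ G.dist x v) (heq : (G.bfsParent x)^[k] v = (G.bfsParent x)^[k] w)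
    (hmin : ∀ i < k, (G.bfsParent x)^[i] v ≠ (G.bfsParent x)^[i] w) :
    ∃ q : G.Walk w v, q.IsPath ∧ q.length = 2 * k ∧
      ∀ u ∈ q.support, ∃ i ≤ k, u = (G.bfsParent x)^[i] w ∨ u = (G.bfsParent x)^[i] v := by
  obtain ⟨pv, hpv, hpvl, hpvs⟩ := exists_isPath_bfsParent_iterate v hk
  obtain ⟨pw, hpw, hpwl, hpws⟩ := exists_isPath_bfsParent_iterate w (hd ▸ hk)
  have hpv' : (pv.copy heq rfl).IsPath := by simpa using hpv
  refine ⟨pw.reverse.append (pv.copy heq rfl), ?_, ?_, fun u hu => ?_⟩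
  · refine hpw.reverse.append_of_disjoint hpv' fun u hu hu' => ?_
    rw [Walk.support_reverse, List.mem_reverse] at hu
    obtain ⟨i, hi, rfl⟩ := hpws u hu
    obtain ⟨j, hj, hji⟩ := hpvs _ (List.mem_of_mem_tail (by simpa using hu'))
    obtain rfl := eq_of_bfsParent_iterate_eq hd (hj.trans hk) (hd ▸ hi.trans hk) hji.symm
    refine hmin j (lt_of_le_of_ne hj ?_) hji.symm
    rintro rfl
    exact hpv'.start_notMem_support_tail hu'
  · rw [Walk.length_append, Walk.length_reverse, Walk.length_copy, hpvl, hpwl, two_mul]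
  · rw [Walk.mem_support_append_iff, Walk.support_reverse, List.mem_reverse,
      Walk.support_copy] at hu
    rcases hu with hu | hu
    · obtain ⟨i, hi, rfl⟩ := hpws u hu
      exact ⟨i, hi, .inl rfl⟩
    · obtain ⟨i, hi, rfl⟩ := hpvs u hu
      exact ⟨i, hi, .inr rfl⟩

/-- The cycle runs along `Q` from `v` to `w` and returns through the tree branches of `w` and
`v`, which first meet `k` levels up. -/
lemma exists_isCycle_of_bfsParent_iterate_eq {k : ℕ} (hvw : v ≠ w)
    (hd : G.dist x v = G.dist x w) (hk : k ≤ G.dist x v)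
    (heq : (G.bfsParent x)^[k] v = (G.bfsParent x)^[k] w)
    (hmin : ∀ i < k, (G.bfsParent x)^[i] v ≠ (G.bfsParent x)^[i] w)
    (Q : G.Walk v w) (hQ : Q.IsPath)
    (hQk : ∀ u ∈ Q.support, ∀ i, 0 < i → i ≤ k →
      u ≠ (G.bfsParent x)^[i] v ∧ u ≠ (G.bfsParent x)^[i] w) :
    ∃ (u : V) (c : G.Walk u u), c.IsCycle ∧ c.length = 2 * k + Q.length := by
  obtain ⟨q, hq, hql, hqs⟩ := exists_isPath_bfsParent_iterate_of_eq hd hk heq hmin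
  have hk0 : 0 < k := Nat.pos_of_ne_zero fun h => hvw (by simpa [h] using heq)
  refine ⟨v, Q.append q, hQ.isCycle_append hq (fun u hu hu' => ?_) (.inr (by omega)),
    by rw [Walk.length_append, hql, add_comm]⟩
  obtain ⟨i, hi, hiu⟩ := hqs u (List.mem_of_mem_tail hu')
  rcases Nat.eq_zero_or_pos i with rfl | hi0
  · rcases hiu with rfl | rfl
    · exact hq.start_notMem_support_tail hu'
    · exact hQ.start_notMem_support_tail hu
  · have := hQk u (List.mem_of_mem_tail hu) i hi0 hi
    tauto

lemma exists_bfsParent_iterate_eq_and_isCycle {t j : ℕ} (hvw : v ≠ w)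
    (hv : G.dist x v = t) (hw : G.dist x w = t) (hj : j ≤ t)
    (heq : (G.bfsParent x)^[j] v = (G.bfsParent x)^[j] w)
    (Q : G.Walk v w) (hQ : Q.IsPath) (hQt : ∀ u ∈ Q.support, t ≤ G.dist x u) :
    ∃ k, 0 < k ∧ k ≤ j ∧ (G.bfsParent x)^[k] v = (G.bfsParent x)^[k] w ∧
      ∃ (u : V) (c : G.Walk u u), c.IsCycle ∧ c.length = 2 * k + Q.length := by
  classical
  have hex : ∃ k, (G.bfsParent x)^[k] v = (G.bfsParent x)^[k] w := ⟨j, heq⟩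
  have hkj : Nat.find hex ≤ j := Nat.find_min' hex heq
  have hk0 : 0 < Nat.find hex :=
    Nat.pos_of_ne_zero fun h => hvw (by simpa [h] using Nat.find_spec hex)
  refine ⟨_, hk0, hkj, Nat.find_spec hex, exists_isCycle_of_bfsParent_iterate_eq hvw
    (hv.trans hw.symm) (by omega) (Nat.find_spec hex) (fun i => Nat.find_min hex) Q hQ ?_⟩
  intro u hu i hi hij
  have hut := hQt u hu
  constructor <;> rintro rfl <;> rw [dist_bfsParent_iterate] at hut <;> omega

def NoEvenCycleOfLengthIn (G : SimpleGraph V) (a b : ℕ) : Prop :=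
  ∀ (v : V) (c : G.Walk v v), c.IsCycle → ¬(a ≤ c.length ∧ c.length ≤ b ∧ Even c.length)

section ForbiddenEvenCycles

variable {t : ℕ}

lemma exists_bfsParent_iterate_eq_of_noEvenCycle {j : ℕ}
    (hcyc : G.NoEvenCycleOfLengthIn 8 (2 * t + 2))
    (hv : G.dist x v = t) (hw : G.dist x w = t) (hj : j ≤ t)
    (heq : (G.bfsParent x)^[j] v = (G.bfsParent x)^[j] w)
    (Q : G.Walk v w) (hQ : Q.IsPath) (hQt : ∀ u ∈ Q.support, t ≤ G.dist x u)
    (hQe : Even Q.length) (hQ0 : 0 < Q.length) :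
    ∃ k, 0 < k ∧ k ≤ j ∧ (G.bfsParent x)^[k] v = (G.bfsParent x)^[k] w ∧
      (2 * k + Q.length < 8 ∨ 2 * t + 2 < 2 * k + Q.length) := by
  have hvw : v ≠ w := fun h => (Walk.not_nil_iff_lt_length.mpr hQ0) (hQ.nil_iff_eq.mpr h)
  obtain ⟨k, hk0, hkj, hk, u, c, hc, hcl⟩ :=
    exists_bfsParent_iterate_eq_and_isCycle hvw hv hw hj heq Q hQ hQt
  refine ⟨k, hk0, hkj, hk, ?_⟩
  by_contra! h
  exact hcyc u c hc ⟨hcl ▸ h.1, hcl ▸ h.2, hcl ▸ (even_two_mul k).add hQe⟩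

lemma bfsParent_iterate_two_eq_of_length_eq_two (hcyc : G.NoEvenCycleOfLengthIn 8 (2 * t + 2))
    (ht : 0 < t) (hv : G.dist x v = t) (hw : G.dist x w = t) (Q : G.Walk v w) (hQ : Q.IsPath)
    (hQt : ∀ u ∈ Q.support, t ≤ G.dist x u) (hQl : Q.length = 2) :
    (G.bfsParent x)^[2] v = (G.bfsParent x)^[2] w := by
  have hroot : ∀ u, G.dist x u = t → (G.bfsParent x)^[t] u = x := fun u hu =>
    hu ▸ bfsParent_iterate_dist (.of_dist_ne_zero (by omega))
  obtain ⟨k, -, hkt, hk, hkQ⟩ := exists_bfsParent_iterate_eq_of_noEvenCycle hcyc hv hw le_rfl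
    ((hroot v hv).trans (hroot w hw).symm) Q hQ hQt (by rw [hQl]; decide) (by omega)
  exact Function.iterate_eq_iterate_of_le hk (by omega)

lemma bfsParent_eq_of_length_eq_four (hcyc : G.NoEvenCycleOfLengthIn 8 (2 * t + 2))
    (ht : 3 ≤ t) (hv : G.dist x v = t) (hw : G.dist x w = t) (Q : G.Walk v w) (hQ : Q.IsPath)
    (hQt : ∀ u ∈ Q.support, t ≤ G.dist x u) (hQl : Q.length = 4)
    (h2 : (G.bfsParent x)^[2] v = (G.bfsParent x)^[2] w) :
    G.bfsParent x v = G.bfsParent x w := by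
  obtain ⟨k, -, hk2, hk, hkQ⟩ := exists_bfsParent_iterate_eq_of_noEvenCycle hcyc hv hw
    (by omega) h2 Q hQ hQt (by rw [hQl]; decide) (by omega)
  exact Function.iterate_eq_iterate_of_le (j := 1) hk (by omega)

lemma bfsParent_ne_of_length_eq_six (hcyc : G.NoEvenCycleOfLengthIn 8 (2 * t + 2))
    (ht : 3 ≤ t) (hv : G.dist x v = t) (hw : G.dist x w = t) (Q : G.Walk v w) (hQ : Q.IsPath)
    (hQt : ∀ u ∈ Q.support, t ≤ G.dist x u) (hQl : Q.length = 6) :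
    G.bfsParent x v ≠ G.bfsParent x w := fun h1 => by
  obtain ⟨k, hk0, hk1, -, hkQ⟩ := exists_bfsParent_iterate_eq_of_noEvenCycle (j := 1) hcyc hv hw
    (by omega) h1 Q hQ hQt (by rw [hQl]; decide) (by omega)
  omega

lemma exists_isCycle_length_eight_of_bfsParent_eq {v₀ v₁ v₂ v₄ v₅ v₆ : V} (ht : 0 < t)
    (h₀₁ : G.Adj v₀ v₁) (h₁₂ : G.Adj v₁ v₂) (h₄₅ : G.Adj v₄ v₅) (h₅₆ : G.Adj v₅ v₆)
    (hnd : [v₀, v₁, v₂, v₄, v₅, v₆].Nodup) (hlev : ∀ u ∈ [v₀, v₁, v₂, v₄, v₅, v₆], t ≤ G.dist x u)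
    (hd₀ : G.dist x v₀ = t) (hd₄ : G.dist x v₄ = t) (hd₆ : G.dist x v₆ = t)
    (e₀₄ : G.bfsParent x v₀ = G.bfsParent x v₄) (e₂₆ : G.bfsParent x v₂ = G.bfsParent x v₆)
    (hne : G.bfsParent x v₀ ≠ G.bfsParent x v₆) :
    ∃ (u : V) (c : G.Walk u u), c.IsCycle ∧ c.length = 8 := by
  have hpar : ∀ v, G.dist x v = t → ∀ u ∈ [v₀, v₁, v₂, v₄, v₅, v₆], u ≠ G.bfsParent x v :=
    fun v hv u hu h => by
      have := hlev u hu
      rw [h, dist_bfsParent, hv] at this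
      omega
  have hb := hpar v₀ hd₀
  have hc := hpar v₆ hd₆
  simp only [List.mem_cons, List.not_mem_nil, or_false, forall_eq_or_imp, forall_eq] at hb hc
  simp only [List.nodup_cons, List.mem_cons, List.not_mem_nil, or_false, not_or,
    List.nodup_nil, and_true] at hnd
  have hc₂ : G.Adj v₂ (G.bfsParent x v₆) :=
    e₂₆ ▸ (bfsParent_adj (by have := hlev v₂ (by simp); omega)).symm
  have hc₆ : G.Adj (G.bfsParent x v₆) v₆ := bfsParent_adj (by omega)
  let Q : G.Walk v₀ v₄ := .cons h₀₁ (.cons h₁₂ (.cons hc₂ (.cons hc₆ (.cons h₅₆.symm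
    (.cons h₄₅.symm .nil)))))
  have hQ : Q.IsPath := .mk' (by
    simp only [Q, Walk.support_cons, Walk.support_nil, List.nodup_cons, List.mem_cons,
      List.not_mem_nil, or_false, not_or, List.nodup_nil, and_true]
    grind)
  have hQ₁ : ∀ u ∈ Q.support, ∀ i, 0 < i → i ≤ 1 →
      u ≠ (G.bfsParent x)^[i] v₀ ∧ u ≠ (G.bfsParent x)^[i] v₄ := by
    intro u hu i hi0 hi1
    obtain rfl : i = 1 := by omega
    simp only [Q, Walk.support_cons, Walk.support_nil, List.mem_cons, List.not_mem_nil,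
      or_false] at hu
    rw [Function.iterate_one, ← e₀₄]
    grind
  have hne₀₄ : v₀ ≠ v₄ := by grind
  exact exists_isCycle_of_bfsParent_iterate_eq (k := 1) hne₀₄ (hd₀.trans hd₄.symm)
    (by omega) e₀₄ (by simpa using hne₀₄) Q hQ hQ₁

end ForbiddenEvenCycles

end SimpleGraph

open SimpleGraph

theorem no_sixpath_at_level_t_general
    (t : ℕ) (ht : 3 ≤ t) (V : Type) (G : SimpleGraph V)
    (hcyc : ∀ (v : V) (w : G.Walk v v), w.IsCycle →
      ¬(8 ≤ w.length ∧ w.length ≤ 2 * t + 2 ∧ Even w.length))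
    (x : V) :
    ¬ ∃ v₀ v₁ v₂ v₃ v₄ v₅ v₆ : V,
      ([v₀, v₁, v₂, v₃, v₄, v₅, v₆] : List V).Nodup ∧
      G.Adj v₀ v₁ ∧ G.Adj v₁ v₂ ∧ G.Adj v₂ v₃ ∧ G.Adj v₃ v₄ ∧ G.Adj v₄ v₅ ∧ G.Adj v₅ v₆ ∧
      G.dist x v₀ = t ∧ G.dist x v₂ = t ∧ G.dist x v₄ = t ∧ G.dist x v₆ = t ∧
      (G.dist x v₁ = t ∨ G.dist x v₁ = t + 1) ∧
      (G.dist x v₃ = t ∨ G.dist x v₃ = t + 1) ∧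
      (G.dist x v₅ = t ∨ G.dist x v₅ = t + 1) := by
  rintro ⟨v₀, v₁, v₂, v₃, v₄, v₅, v₆, hnd, h₀₁, h₁₂, h₂₃, h₃₄, h₄₅, h₅₆,
    hd₀, hd₂, hd₄, hd₆, hd₁, hd₃, hd₅⟩
  have hlev : ∀ u ∈ [v₀, v₁, v₂, v₃, v₄, v₅, v₆], t ≤ G.dist x u := by
    simp only [List.mem_cons, List.not_mem_nil, or_false, forall_eq_or_imp, forall_eq]
    omega
  have hsub : ∀ {a b : V} (P : G.Walk a b), P.support.Sublist [v₀, v₁, v₂, v₃, v₄, v₅, v₆] →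
      P.IsPath ∧ ∀ u ∈ P.support, t ≤ G.dist x u := fun _ hP =>
    ⟨.mk' (hnd.sublist hP), fun u hu => hlev u (hP.subset hu)⟩
  let P₀₂ := Walk.cons h₀₁ (.cons h₁₂ .nil)
  let P₂₄ := Walk.cons h₂₃ (.cons h₃₄ .nil)
  let P₄₆ := Walk.cons h₄₅ (.cons h₅₆ .nil)
  obtain ⟨p₀₂, l₀₂⟩ := hsub P₀₂ (by simp [P₀₂])
  obtain ⟨p₂₄, l₂₄⟩ := hsub P₂₄ (by simp [P₂₄])
  obtain ⟨p₄₆, l₄₆⟩ := hsub P₄₆ (.cons _ <| .cons _ <| .cons _ <| .cons _ <| .refl _)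
  obtain ⟨p₀₄, l₀₄⟩ := hsub (P₀₂.append P₂₄) (by simp [P₀₂, P₂₄])
  obtain ⟨p₂₆, l₂₆⟩ := hsub (P₂₄.append P₄₆) (by simp [P₂₄, P₄₆])
  obtain ⟨p₀₆, l₀₆⟩ := hsub (P₀₂.append (P₂₄.append P₄₆)) (by simp [P₀₂, P₂₄, P₄₆])
  have e₀₂ := bfsParent_iterate_two_eq_of_length_eq_two hcyc (by omega) hd₀ hd₂ P₀₂ p₀₂ l₀₂ rfl
  have e₂₄ := bfsParent_iterate_two_eq_of_length_eq_two hcyc (by omega) hd₂ hd₄ P₂₄ p₂₄ l₂₄ rfl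
  have e₄₆ := bfsParent_iterate_two_eq_of_length_eq_two hcyc (by omega) hd₄ hd₆ P₄₆ p₄₆ l₄₆ rfl
  have e₀₄ := bfsParent_eq_of_length_eq_four hcyc ht hd₀ hd₄ _ p₀₄ l₀₄ rfl (e₀₂.trans e₂₄)
  have e₂₆ := bfsParent_eq_of_length_eq_four hcyc ht hd₂ hd₆ _ p₂₆ l₂₆ rfl (e₂₄.trans e₄₆)
  have hne := bfsParent_ne_of_length_eq_six hcyc ht hd₀ hd₆ _ p₀₆ l₀₆ rfl
  have hs : [v₀, v₁, v₂, v₄, v₅, v₆].Sublist [v₀, v₁, v₂, v₃, v₄, v₅, v₆] :=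
    .cons_cons _ <| .cons_cons _ <| .cons_cons _ <| .cons _ <| .refl _
  obtain ⟨u, c, hc, hc8⟩ := exists_isCycle_length_eight_of_bfsParent_eq (by omega)
    h₀₁ h₁₂ h₄₅ h₅₆ (hnd.sublist hs) (fun u hu => hlev u (hs.subset hu)) hd₀ hd₄ hd₆ e₀₄ e₂₆ hne
  exact hcyc u c hc ⟨hc8.ge, by omega, hc8 ▸ by decide⟩

/-- Claim 2: if `t ≥ 3` and `G` has no cycle of length in `{8, 10, ..., 2t+2}`, then `G`
contains no path `v₀v₁v₂v₃v₄v₅v₆` with `v₀, v₂, v₄, v₆` at distance exactly `t` from `x`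
and `v₁, v₃, v₅` at distance exactly `t` or `t+1` from `x`. -/
theorem no_sixpath_at_level_t
    (t : ℕ) (ht : 3 ≤ t) (V : Type) [Fintype V] (G : SimpleGraph V)
    (hcyc : ∀ (v : V) (w : G.Walk v v), w.IsCycle →
      ¬(8 ≤ w.length ∧ w.length ≤ 2 * t + 2 ∧ Even w.length))
    (x : V) :
    ¬ ∃ v₀ v₁ v₂ v₃ v₄ v₅ v₆ : V,
      ([v₀, v₁, v₂, v₃, v₄, v₅, v₆] : List V).Nodup ∧
      G.Adj v₀ v₁ ∧ G.Adj v₁ v₂ ∧ G.Adj v₂ v₃ ∧ G.Adj v₃ v₄ ∧ G.Adj v₄ v₅ ∧ G.Adj v₅ v₆ ∧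
      G.dist x v₀ = t ∧ G.dist x v₂ = t ∧ G.dist x v₄ = t ∧ G.dist x v₆ = t ∧
      (G.dist x v₁ = t ∨ G.dist x v₁ = t + 1) ∧
      (G.dist x v₃ = t ∨ G.dist x v₃ = t + 1) ∧
      (G.dist x v₅ = t ∨ G.dist x v₅ = t + 1) :=
  no_sixpath_at_level_t_general t ht V G hcyc x
end

section
/- Let t ≥ 3 be an integer, let G be a finite simple graph containing no cycle whose length lies in {8, 10, 12, …, 2t+2}, and let x be a vertex of G. Call an edge uv of G a bottleneck of type 2 if u is at distance exactly t from x, v is at distance exactly t+1 from x, and v has at least four neighbours at distance exactly t from x. Then the number of bottlenecks of type 2 is at most 2·|A_t(x)|, twice the number of vertices at distance exactly t from x. -/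
/-!
Fix a breadth-first search tree rooted at `x`, with parent map `π`, and let `N v` be the set of
neighbours of `v` at distance `t` from `x`. If a path `Z` through vertices at distance `≥ t` joins
`a` and `b` at distance `t`, and the tree branches of `a` and `b` first meet after `k ≤ t` steps,
then `Z` and the two branches form a cycle of length `|Z| + 2k`. As the lengths `8, 10, …, 2t + 2`
are excluded, for vertices `v, v', v''` at distance `t + 1`:

* all of `N v` has a common grandparent (otherwise `Z = u v u'` with `k ≥ 3`);
* if `v ≠ v'` and `a ∈ N v ∩ N v'`, then all of `N v \ {a}` and `N v' \ {a}` has a common parent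
  (otherwise `Z = z v a v' z'` with `k = 2`);
* if `v, v', v''` are distinct with `|N v|, |N v'|, |N v''| ≥ 4`, then `a ∈ N v ∩ N v'` and
  `b ∈ N v' ∩ N v''` force `a = b` (otherwise the previous point yields `u₀ ∈ N v` and
  `u₁ ∈ N v''` with a common parent, and `Z = u₀ v a v' b v'' u₁` with `k = 1`).

So the sets `N v` of the bottleneck vertices `v` overlap only in pairs or in sunflowers with a
one-point kernel, and such a family of sets of size `≥ 2` has `∑ |N v| ≤ 2 |⋃ N v| ≤ 2 |A_t(x)|`.
-/

open Finset SimpleGraph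

namespace Finset

variable {ι α : Type*} [DecidableEq α] {N : ι → Finset α}

theorem sum_card_le_card_mul_card_biUnion (s : Finset ι) :
    ∑ i ∈ s, #(N i) ≤ #s * #(s.biUnion N) :=
  calc ∑ i ∈ s, #(N i) ≤ ∑ _i ∈ s, #(s.biUnion N) :=
        sum_le_sum fun _ hi => card_le_card (subset_biUnion_of_mem N hi)
    _ = #s * #(s.biUnion N) := by rw [sum_const, smul_eq_mul]

variable [DecidableEq ι]

theorem sum_card_le_two_mul_card_biUnion_of_pairwise_inter_subset (a : α) {s : Finset ι}
    (h2 : ∀ i ∈ s, 2 ≤ #(N i)) (hs : (s : Set ι).Pairwise fun i j => N i ∩ N j ⊆ {a}) :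
    ∑ i ∈ s, #(N i) ≤ 2 * #(s.biUnion N) := by
  induction s using Finset.induction_on with
  | empty => simp
  | insert i s hi ih =>
    have hinter : #(N i ∩ s.biUnion N) ≤ 1 := by
      refine (card_le_card fun b hb => ?_).trans (card_singleton a).le
      obtain ⟨hbi, hbs⟩ := mem_inter.1 hb
      obtain ⟨j, hj, hbj⟩ := mem_biUnion.1 hbs
      exact hs (by simp) (by simp [hj]) (by rintro rfl; exact hi hj) (mem_inter.2 ⟨hbi, hbj⟩)
    have := card_union_add_card_inter (N i) (s.biUnion N)
    have := h2 i (mem_insert_self i s)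
    have := ih (fun j hj => h2 j (mem_insert_of_mem hj)) (hs.mono (by simp))
    rw [sum_insert hi, biUnion_insert]
    omega

section Chain

variable {s : Finset ι} (hchain : ∀ i ∈ s, ∀ j ∈ s, ∀ k ∈ s, i ≠ j → j ≠ k → i ≠ k →
    ∀ a ∈ N i ∩ N j, ∀ b ∈ N j ∩ N k, a = b)
include hchain

theorem disjoint_biUnion_filter_mem {a : α} {i₀ i₁ : ι} (hi₀ : i₀ ∈ s) (hi₁ : i₁ ∈ s)
    (hne : i₁ ≠ i₀) (ha₀ : a ∈ N i₀) (ha₁ : a ∈ N i₁) :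
    Disjoint ((s.filter (a ∈ N ·)).biUnion N) ((s \ s.filter (a ∈ N ·)).biUnion N) := by
  set c := s.filter (a ∈ N ·)
  have hi₀c : i₀ ∈ c := mem_filter.2 ⟨hi₀, ha₀⟩
  have hi₁c : i₁ ∈ c := mem_filter.2 ⟨hi₁, ha₁⟩
  simp only [disjoint_left, mem_biUnion, mem_sdiff, not_exists, not_and]
  rintro b ⟨j, hjc, hbj⟩ k ⟨hks, hkc⟩ hbk
  obtain ⟨m, hmc, hmj⟩ : ∃ m ∈ c, m ≠ j :=
    if h : j = i₀ then ⟨i₁, hi₁c, h ▸ hne⟩ else ⟨i₀, hi₀c, Ne.symm h⟩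
  have hjk : j ≠ k := by rintro rfl; exact hkc hjc
  have hmk : m ≠ k := by rintro rfl; exact hkc hmc
  have hab := hchain m (filter_subset _ _ hmc) j (filter_subset _ _ hjc) k hks hmj hjk hmk
    a (mem_inter.2 ⟨(mem_filter.1 hmc).2, (mem_filter.1 hjc).2⟩) b (mem_inter.2 ⟨hbj, hbk⟩)
  exact hkc (mem_filter.2 ⟨hks, hab ▸ hbk⟩)

variable (h2 : ∀ i ∈ s, 2 ≤ #(N i))
include h2

theorem sum_card_filter_mem_le (a : α) :
    ∑ i ∈ s.filter (a ∈ N ·), #(N i) ≤ 2 * #((s.filter (a ∈ N ·)).biUnion N) := by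
  set c := s.filter (a ∈ N ·)
  by_cases hc : #c ≤ 2
  · have := sum_card_le_card_mul_card_biUnion (N := N) c
    have := Nat.mul_le_mul_right #(c.biUnion N) hc
    omega
  refine sum_card_le_two_mul_card_biUnion_of_pairwise_inter_subset a
    (fun i hi => h2 i (filter_subset _ _ hi)) fun j hj k hk hjk b hb => ?_
  obtain ⟨m, hmc, hm⟩ := exists_mem_notMem_of_card_lt_card (card_le_two.trans_lt (not_le.1 hc))
  simp only [mem_insert, mem_singleton, not_or] at hm
  exact mem_singleton.2 (hchain m (filter_subset _ _ hmc) j (filter_subset _ _ hj) k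
    (filter_subset _ _ hk) hm.1 hjk hm.2 a
    (mem_inter.2 ⟨(mem_filter.1 hmc).2, (mem_filter.1 hj).2⟩) b hb).symm

theorem exists_subset_disjoint_biUnion_sdiff (hs : s.Nonempty) :
    ∃ c ⊆ s, c.Nonempty ∧ Disjoint (c.biUnion N) ((s \ c).biUnion N) ∧
      ∑ i ∈ c, #(N i) ≤ 2 * #(c.biUnion N) := by
  obtain ⟨i₀, hi₀⟩ := hs
  by_cases hmeet : ∃ i₁ ∈ s, i₁ ≠ i₀ ∧ ∃ a ∈ N i₀, a ∈ N i₁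
  · obtain ⟨i₁, hi₁, hne, a, ha₀, ha₁⟩ := hmeet
    exact ⟨_, filter_subset _ _, ⟨i₀, mem_filter.2 ⟨hi₀, ha₀⟩⟩,
      disjoint_biUnion_filter_mem hchain hi₀ hi₁ hne ha₀ ha₁, sum_card_filter_mem_le hchain h2 a⟩
  push Not at hmeet
  refine ⟨{i₀}, singleton_subset_iff.2 hi₀, singleton_nonempty i₀, ?_, ?_⟩
  · simp only [singleton_biUnion, disjoint_left, mem_biUnion, mem_sdiff, mem_singleton,
      not_exists, not_and, and_imp]
    exact fun b hb j hj hji hbj => hmeet j hj hji b hb hbj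
  · rw [sum_singleton, singleton_biUnion]
    omega

theorem sum_card_le_two_mul_card_biUnion : ∑ i ∈ s, #(N i) ≤ 2 * #(s.biUnion N) := by
  induction s using Finset.strongInduction with
  | H s ih =>
  rcases s.eq_empty_or_nonempty with rfl | hs
  · simp
  obtain ⟨c, hcs, hc, hdisj, hcN⟩ := exists_subset_disjoint_biUnion_sdiff hchain h2 hs
  have hrest := ih (s \ c) (sdiff_ssubset hcs hc)
    (fun i hi j hj k hk => hchain i (sdiff_subset hi) j (sdiff_subset hj) k (sdiff_subset hk))
    fun i hi => h2 i (sdiff_subset hi)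
  calc ∑ i ∈ s, #(N i) = ∑ i ∈ c, #(N i) + ∑ i ∈ s \ c, #(N i) := by
        rw [add_comm, sum_sdiff hcs]
    _ ≤ 2 * #(c.biUnion N) + 2 * #((s \ c).biUnion N) := add_le_add hcN hrest
    _ = 2 * #(s.biUnion N) := by
        rw [← mul_add, ← card_union_of_disjoint hdisj, ← union_biUnion, union_sdiff_of_subset hcs]

end Chain

theorem ncard_setOf_snd_mem_and_fst_mem {β : Type*} [DecidableEq β] (s : Finset ι)
    (N : ι → Finset β) : {p : β × ι | p.2 ∈ s ∧ p.1 ∈ N p.2}.ncard = ∑ i ∈ s, #(N i) := by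
  have hs : {p : β × ι | p.2 ∈ s ∧ p.1 ∈ N p.2} = ↑(s.biUnion fun i => N i ×ˢ {i}) := by
    ext ⟨b, i⟩
    simp [and_comm]
  rw [hs, Set.ncard_coe_finset, card_biUnion]
  · simp
  · intro i _ i' _ hii'
    simp only [Function.onFun, disjoint_left, mem_product, mem_singleton]
    rintro p ⟨-, rfl⟩ ⟨-, h⟩
    exact hii' h

end Finset

theorem Set.exists_mem_ne_ne_ne {α : Type*} {s : Set α} (hs : 3 < s.ncard) (a b c : α) :
    ∃ e ∈ s, e ≠ a ∧ e ≠ b ∧ e ≠ c := by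
  have h3 : ({a, b, c} : Set α).ncard ≤ 3 := by
    grw [Set.ncard_insert_le, Set.ncard_insert_le, Set.ncard_singleton]
  obtain ⟨e, he, hne⟩ := Set.exists_mem_notMem_of_ncard_lt_ncard (h3.trans_lt hs)
  simp only [Set.mem_insert_iff, Set.mem_singleton_iff, not_or] at hne
  exact ⟨e, he, hne⟩

namespace SimpleGraph

variable {V : Type*} {G : SimpleGraph V} {x y : V} {n : ℕ}

theorem Walk.IsPath.append {u v w : V} {p : G.Walk u v} {q : G.Walk v w} (hp : p.IsPath)
    (hq : q.IsPath) (h : ∀ y ∈ p.support, y ∈ q.support → y = v) : (p.append q).IsPath := by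
  have hq' := hq.support_nodup
  rw [← Walk.cons_tail_support, List.nodup_cons] at hq'
  rw [Walk.isPath_def, Walk.support_append, List.nodup_append]
  refine ⟨hp.support_nodup, hq'.2, fun y hy y' hy' hyy' => hq'.1 ?_⟩
  subst hyy'
  exact h y hy (List.mem_of_mem_tail hy') ▸ hy'

theorem exists_adj_dist_eq_of_dist_eq_succ (h : G.dist x y = n + 1) :
    ∃ w, G.Adj y w ∧ G.dist x w = n := by
  obtain ⟨p, hp⟩ := exists_walk_of_dist_ne_zero (G := G) (u := x) (v := y) (by omega)
  have hnil : ¬p.Nil := by rw [← Walk.length_eq_zero_iff, hp, h]; omega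
  have hadj := p.adj_penultimate hnil
  refine ⟨p.penultimate, hadj.symm, ?_⟩
  have hle : G.dist x p.penultimate ≤ n := by
    have := dist_le p.dropLast
    rw [Walk.length_dropLast, hp, h] at this
    omega
  rcases hadj.diff_dist_adj (u := x) with h' | h' | h' <;> omega

variable (G x) in
def IsBFSParent (π : V → V) : Prop :=
  ∀ ⦃y : V⦄ ⦃n : ℕ⦄, G.dist x y = n + 1 → G.Adj y (π y) ∧ G.dist x (π y) = n

variable (G x) in
theorem exists_isBFSParent : ∃ π, G.IsBFSParent x π := by
  choose! π hπ using fun y n (h : G.dist x y = n + 1) => exists_adj_dist_eq_of_dist_eq_succ h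
  refine ⟨fun y => π y (G.dist x y - 1), fun y n h => ?_⟩
  simpa [h] using hπ y n h

variable (G x) in
def neighborSetAtDist (t : ℕ) (v : V) : Set V := {w | G.Adj v w ∧ G.dist x w = t}

namespace IsBFSParent

variable {π : V → V} (hπ : G.IsBFSParent x π)
include hπ

theorem dist_iterate {k : ℕ} (h : G.dist x y = n + k) : G.dist x (π^[k] y) = n := by
  induction k generalizing y with
  | zero => exact h
  | succ k ih => exact ih (hπ (by omega : G.dist x y = n + k + 1)).2

theorem iterate_dist_eq (h : G.dist x y ≠ 0) : π^[G.dist x y] y = x := by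
  obtain ⟨n, hn⟩ := Nat.exists_eq_succ_of_ne_zero h
  have h1 : G.dist x (π^[n] y) = 1 := hπ.dist_iterate (by omega)
  have hadj := (hπ (n := 0) h1).1
  have hreach : G.Reachable x (π (π^[n] y)) :=
    (Reachable.of_dist_ne_zero (by omega)).trans hadj.reachable
  rw [hn, Function.iterate_succ_apply']
  exact ((hreach.dist_eq_zero_iff).1 (hπ (n := 0) h1).2).symm

theorem exists_isPath_to_iterate {k : ℕ} (hk : k ≤ G.dist x y) :
    ∃ p : G.Walk y (π^[k] y), p.IsPath ∧ p.length = k ∧ ∀ w ∈ p.support, ∃ i ≤ k, π^[i] y = w := by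
  induction k generalizing y with
  | zero => exact ⟨.nil, by simp, rfl, by simp⟩
  | succ k ih =>
    have hy := hπ (y := y) (n := G.dist x y - 1) (by omega)
    obtain ⟨p, hp, hlen, hmem⟩ := ih (y := π y) (by omega)
    refine ⟨.cons hy.1 p, ?_, by simp [hlen], ?_⟩
    · refine hp.cons fun hyp => ?_
      obtain ⟨i, hi, hiy⟩ := hmem y hyp
      have := hπ.dist_iterate (y := π y) (k := i) (n := G.dist x y - 1 - i) (by omega)
      rw [hiy] at this
      omega
    · intro w hw
      rcases List.mem_cons.1 hw with rfl | hw
      · exact ⟨0, by omega, rfl⟩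
      · obtain ⟨i, hi, rfl⟩ := hmem w hw
        exact ⟨i + 1, by omega, rfl⟩

/-- Up the branch of `b` to `π^[k] b = π^[k] a`, then down the branch of `a` to `π a`;
this is a path as the branches are disjoint below their first meeting point. -/
theorem exists_isPath_of_iterate_eq {a b : V} {t k : ℕ} (ha : G.dist x a = t)
    (hb : G.dist x b = t) (hk0 : 0 < k) (hkt : k ≤ t) (hmeet : π^[k] a = π^[k] b)
    (hsep : ∀ i < k, π^[i] a ≠ π^[i] b) :
    ∃ q : G.Walk b (π a), q.IsPath ∧ q.length + 1 = 2 * k ∧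
      ∀ w ∈ q.support, w = b ∨ G.dist x w < t := by
  obtain ⟨j, rfl⟩ : ∃ j, k = j + 1 := ⟨k - 1, by omega⟩
  have hlevel_a : ∀ i ≤ t, G.dist x (π^[i] a) = t - i := fun i _ => hπ.dist_iterate (by omega)
  have hlevel_b : ∀ i ≤ t, G.dist x (π^[i] b) = t - i := fun i _ => hπ.dist_iterate (by omega)
  obtain ⟨P, hP, hPlen, hPmem⟩ := hπ.exists_isPath_to_iterate (y := b) (k := j + 1) (by omega)
  obtain ⟨R, hR, hRlen, hRmem⟩ := hπ.exists_isPath_to_iterate (y := π a) (k := j)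
    (by rw [(hπ (show G.dist x a = t - 1 + 1 by omega)).2]; omega)
  obtain ⟨R', hR', hR'len, hR'mem⟩ : ∃ R' : G.Walk (π^[j + 1] b) (π a), R'.IsPath ∧
      R'.length = j ∧ ∀ w ∈ R'.support, ∃ i ≤ j, π^[i + 1] a = w :=
    ⟨R.reverse.copy (show π^[j] (π a) = π^[j + 1] b from hmeet) rfl,
      (Walk.isPath_copy _ _ _).2 hR.reverse, by rw [Walk.length_copy, Walk.length_reverse, hRlen],
      fun w hw => hRmem w <| by
        rwa [Walk.support_copy, Walk.support_reverse, List.mem_reverse] at hw⟩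
  refine ⟨P.append R', hP.append hR' fun w hwP hwR => ?_,
    by rw [Walk.length_append, hPlen, hR'len]; omega, fun w hw => ?_⟩
  · obtain ⟨i, hi, rfl⟩ := hPmem w hwP
    obtain ⟨i', hi', hi'w⟩ := hR'mem _ hwR
    have hii' : i = i' + 1 := by
      have := hlevel_a (i' + 1) (by omega)
      rw [hi'w, hlevel_b i (by omega)] at this
      omega
    subst hii'
    rcases Nat.lt_or_ge (i' + 1) (j + 1) with h | h
    · exact absurd hi'w (hsep _ h)
    · rw [show i' = j by omega]
  · rcases (Walk.mem_support_append_iff _ _).1 hw with hw | hw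
    · obtain ⟨i, hi, rfl⟩ := hPmem w hw
      rcases Nat.eq_zero_or_pos i with rfl | hi0
      · exact .inl rfl
      · exact .inr (by rw [hlevel_b i (by omega)]; omega)
    · obtain ⟨i', hi', rfl⟩ := hR'mem _ hw
      exact .inr (by rw [hlevel_a (i' + 1) (by omega)]; omega)

theorem exists_isCycle_of_iterate_eq {a b : V} (Z : G.Walk a b) (hZ : Z.IsPath) {t : ℕ}
    (hZt : ∀ w ∈ Z.support, t ≤ G.dist x w) (ha : G.dist x a = t) (hb : G.dist x b = t)
    {k : ℕ} (hk0 : 0 < k) (hkt : k ≤ t) (hmeet : π^[k] a = π^[k] b)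
    (hsep : ∀ i < k, π^[i] a ≠ π^[i] b) :
    ∃ c : G.Walk (π a) (π a), c.IsCycle ∧ c.length = Z.length + 2 * k := by
  obtain ⟨q, hq, hqlen, hqmem⟩ := hπ.exists_isPath_of_iterate_eq ha hb hk0 hkt hmeet hsep
  have hQ : (Z.append q).IsPath :=
    hZ.append hq fun w hwZ hwq => (hqmem w hwq).resolve_right (not_lt.2 (hZt w hwZ))
  have hZlen : Z.length ≠ 0 := fun h => hsep 0 hk0 (Walk.eq_of_length_eq_zero h)
  refine ⟨.cons (hπ (show G.dist x a = t - 1 + 1 by omega)).1.symm (Z.append q),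
    Walk.isCycle_iff_isPath_tail_and_le_length.2 ⟨by simpa using hQ, ?_⟩, ?_⟩ <;>
  · simp only [Walk.length_cons, Walk.length_append]
    omega

variable {t : ℕ} (ht : 3 ≤ t)
  (hcyc : ∀ (v : V) (w : G.Walk v v), w.IsCycle →
    ¬(8 ≤ w.length ∧ w.length ≤ 2 * t + 2 ∧ Even w.length))
include ht hcyc

theorem parent_parent_eq {v u u' : V} (hv : G.dist x v = t + 1)
    (hu : u ∈ G.neighborSetAtDist x t v) (hu' : u' ∈ G.neighborSetAtDist x t v) :
    π (π u) = π (π u') := by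
  classical
  by_contra hne
  obtain ⟨hvu, hdu⟩ := hu
  obtain ⟨hvu', hdu'⟩ := hu'
  have hroot : ∀ w, G.dist x w = t → π^[t] w = x := fun w hw => hw ▸ hπ.iterate_dist_eq (by omega)
  have hxt : π^[t] u = π^[t] u' := (hroot u hdu).trans (hroot u' hdu').symm
  have hex : ∃ k, π^[k] u = π^[k] u' := ⟨t, hxt⟩
  set k := Nat.find hex
  have hkt : k ≤ t := Nat.find_min' hex hxt
  have hk3 : 3 ≤ k := by
    by_contra! hk
    apply hne
    change π^[2] u = π^[2] u'
    rw [show 2 = (2 - k) + k by omega, Function.iterate_add_apply, Function.iterate_add_apply,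
      Nat.find_spec hex]
  have huu' : u ≠ u' := Nat.find_min hex (by omega : 0 < k)
  let Z : G.Walk u u' := .cons hvu.symm (.cons hvu' .nil)
  have hZ : Z.IsPath := by
    rw [Walk.isPath_def]
    simp only [Z, Walk.support_cons, Walk.support_nil, List.nodup_cons, List.mem_cons,
      List.not_mem_nil, not_or, or_false, not_false_eq_true, List.nodup_nil, and_true]
    and_intros
    all_goals first | assumption | exact ne_of_apply_ne (G.dist x) (by omega)
  have hZt : ∀ w ∈ Z.support, t ≤ G.dist x w := by
    simp only [Z, Walk.support_cons, Walk.support_nil, List.forall_mem_cons, List.not_mem_nil,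
      IsEmpty.forall_iff, implies_true, and_true]
    omega
  obtain ⟨c, hc, hlen⟩ := hπ.exists_isCycle_of_iterate_eq Z hZ hZt hdu hdu' (by omega) hkt
    (Nat.find_spec hex) fun i hi => Nat.find_min hex hi
  simp only [Z, Walk.length_cons, Walk.length_nil] at hlen
  exact hcyc _ c hc ⟨by omega, by omega, ⟨k + 1, by omega⟩⟩

theorem parent_eq_of_mem_of_mem {v v' a z z' : V} (hv : G.dist x v = t + 1)
    (hv' : G.dist x v' = t + 1) (hvv' : v ≠ v') (ha : a ∈ G.neighborSetAtDist x t v)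
    (ha' : a ∈ G.neighborSetAtDist x t v') (hz : z ∈ G.neighborSetAtDist x t v)
    (hz' : z' ∈ G.neighborSetAtDist x t v') (hza : z ≠ a) (hz'a : z' ≠ a) : π z = π z' := by
  by_cases hzz' : z = z'
  · rw [hzz']
  by_contra hne
  have hmeet : π^[2] z = π^[2] z' :=
    (hπ.parent_parent_eq ht hcyc hv hz ha).trans (hπ.parent_parent_eq ht hcyc hv' ha' hz')
  obtain ⟨hva, hda⟩ := ha
  obtain ⟨hv'a, -⟩ := ha'
  obtain ⟨hvz, hdz⟩ := hz
  obtain ⟨hv'z', hdz'⟩ := hz'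
  let Z : G.Walk z z' := .cons hvz.symm (.cons hva (.cons hv'a.symm (.cons hv'z' .nil)))
  have hZ : Z.IsPath := by
    rw [Walk.isPath_def]
    simp only [Z, Walk.support_cons, Walk.support_nil, List.nodup_cons, List.mem_cons,
      List.not_mem_nil, not_or, or_false, not_false_eq_true, List.nodup_nil, and_true]
    and_intros
    all_goals first | assumption | exact Ne.symm ‹_› | exact ne_of_apply_ne (G.dist x) (by omega)
  have hZt : ∀ w ∈ Z.support, t ≤ G.dist x w := by
    simp only [Z, Walk.support_cons, Walk.support_nil, List.forall_mem_cons, List.not_mem_nil,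
      IsEmpty.forall_iff, implies_true, and_true]
    omega
  obtain ⟨c, hc, hlen⟩ := hπ.exists_isCycle_of_iterate_eq Z hZ hZt hdz hdz' two_pos (by omega)
    hmeet (by intro i hi; interval_cases i; exacts [hzz', hne])
  simp only [Z, Walk.length_cons, Walk.length_nil] at hlen
  exact hcyc _ c hc ⟨by omega, by omega, ⟨4, by omega⟩⟩

theorem eq_of_mem_inter_of_mem_inter {v v' v'' a b : V} (hv : G.dist x v = t + 1)
    (hv' : G.dist x v' = t + 1) (hv'' : G.dist x v'' = t + 1) (hvv' : v ≠ v') (hv'v'' : v' ≠ v'')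
    (hvv'' : v ≠ v'') (hN : 4 ≤ (G.neighborSetAtDist x t v).ncard)
    (hN' : 4 ≤ (G.neighborSetAtDist x t v').ncard) (hN'' : 4 ≤ (G.neighborSetAtDist x t v'').ncard)
    (ha : a ∈ G.neighborSetAtDist x t v ∩ G.neighborSetAtDist x t v')
    (hb : b ∈ G.neighborSetAtDist x t v' ∩ G.neighborSetAtDist x t v'') : a = b := by
  by_contra hab
  obtain ⟨w, hw, hwa, hwb, -⟩ := Set.exists_mem_ne_ne_ne hN' a b b
  obtain ⟨u₀, hu₀, hu₀a, hu₀b, -⟩ := Set.exists_mem_ne_ne_ne hN a b b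
  obtain ⟨u₁, hu₁, hu₁a, hu₁b, hu₁u₀⟩ := Set.exists_mem_ne_ne_ne hN'' a b u₀
  have hπu : π u₀ = π u₁ :=
    (hπ.parent_eq_of_mem_of_mem ht hcyc hv hv' hvv' ha.1 ha.2 hu₀ hw hu₀a hwa).trans
      (hπ.parent_eq_of_mem_of_mem ht hcyc hv'' hv' hv'v''.symm hb.2 hb.1 hu₁ hw hu₁b hwb).symm
  obtain ⟨⟨hva, hda⟩, ⟨hv'a, -⟩⟩ := ha
  obtain ⟨⟨hv'b, hdb⟩, ⟨hv''b, -⟩⟩ := hb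
  obtain ⟨hvu₀, hdu₀⟩ := hu₀
  obtain ⟨hv''u₁, hdu₁⟩ := hu₁
  let Z : G.Walk u₀ u₁ := .cons hvu₀.symm (.cons hva (.cons hv'a.symm (.cons hv'b
    (.cons hv''b.symm (.cons hv''u₁ .nil)))))
  have hZ : Z.IsPath := by
    rw [Walk.isPath_def]
    simp only [Z, Walk.support_cons, Walk.support_nil, List.nodup_cons, List.mem_cons,
      List.not_mem_nil, not_or, or_false, not_false_eq_true, List.nodup_nil, and_true]
    and_intros
    all_goals first | assumption | exact Ne.symm ‹_› | exact ne_of_apply_ne (G.dist x) (by omega)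
  have hZt : ∀ w ∈ Z.support, t ≤ G.dist x w := by
    simp only [Z, Walk.support_cons, Walk.support_nil, List.forall_mem_cons, List.not_mem_nil,
      IsEmpty.forall_iff, implies_true, and_true]
    omega
  obtain ⟨c, hc, hlen⟩ := hπ.exists_isCycle_of_iterate_eq Z hZ hZt hdu₀ hdu₁ one_pos (by omega)
    hπu (by intro i hi; interval_cases i; exact hu₁u₀.symm)
  simp only [Z, Walk.length_cons, Walk.length_nil] at hlen
  exact hcyc _ c hc ⟨by omega, by omega, ⟨4, by omega⟩⟩

end IsBFSParent

end SimpleGraph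

/-- If `t ≥ 3` and `G` has no cycle of length in `{8, 10, ..., 2t+2}`, then the number of
bottlenecks of type 2 (edges `uv` with `u` at distance exactly `t` from `x`, `v` at distance
exactly `t+1` from `x`, and `v` having at least four neighbours at distance exactly `t` from
`x`) is at most twice the number of vertices at distance exactly `t` from `x`.
Edges are counted as ordered pairs `(u, v)` with `u` at distance `t` and `v` at distance
`t+1`, so each bottleneck edge is counted exactly once. -/
theorem bottlenecks_type_two_bound
    (t : ℕ) (ht : 3 ≤ t) (V : Type) [Fintype V] (G : SimpleGraph V)
    (hcyc : ∀ (v : V) (w : G.Walk v v), w.IsCycle →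
      ¬(8 ≤ w.length ∧ w.length ≤ 2 * t + 2 ∧ Even w.length))
    (x : V) :
    {p : V × V | G.Adj p.1 p.2 ∧ G.dist x p.1 = t ∧ G.dist x p.2 = t + 1 ∧
        4 ≤ {w : V | G.Adj p.2 w ∧ G.dist x w = t}.ncard}.ncard ≤
      2 * {v : V | G.dist x v = t}.ncard := by
  classical
  obtain ⟨π, hπ⟩ := G.exists_isBFSParent x
  let N : V → Finset V := fun v => (G.neighborSetAtDist x t v).toFinset
  let B : Finset V := {v | G.dist x v = t + 1 ∧ 4 ≤ (G.neighborSetAtDist x t v).ncard}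
  have hB : ∀ v ∈ B, G.dist x v = t + 1 ∧ 4 ≤ (G.neighborSetAtDist x t v).ncard :=
    fun v hv => (mem_filter_univ v).1 hv
  have hpairs : {p : V × V | G.Adj p.1 p.2 ∧ G.dist x p.1 = t ∧ G.dist x p.2 = t + 1 ∧
      4 ≤ {w : V | G.Adj p.2 w ∧ G.dist x w = t}.ncard} = {p | p.2 ∈ B ∧ p.1 ∈ N p.2} := by
    ext ⟨u, v⟩
    simp only [Set.mem_ofPred_eq, B, N, mem_filter_univ, Set.mem_toFinset]
    exact ⟨fun ⟨h₁, h₂, h₃, h₄⟩ => ⟨⟨h₃, h₄⟩, h₁.symm, h₂⟩,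
      fun ⟨⟨h₃, h₄⟩, h₁, h₂⟩ => ⟨h₁.symm, h₂, h₃, h₄⟩⟩
  have hBN : B.biUnion N ⊆ {v : V | G.dist x v = t}.toFinset := fun u hu => by
    obtain ⟨v, -, huv⟩ := mem_biUnion.1 hu
    simpa [N, neighborSetAtDist] using (Set.mem_toFinset.1 huv).2
  rw [hpairs, ncard_setOf_snd_mem_and_fst_mem, Set.ncard_eq_toFinset_card']
  calc ∑ v ∈ B, #(N v) ≤ 2 * #(B.biUnion N) := by
        refine sum_card_le_two_mul_card_biUnion
          (fun v hv v' hv' v'' hv'' h₁ h₂ h₃ a ha b hb => ?_) fun v hv => ?_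
        · simp only [N, mem_inter, Set.mem_toFinset] at ha hb
          exact hπ.eq_of_mem_inter_of_mem_inter ht hcyc (hB v hv).1 (hB v' hv').1
            (hB v'' hv'').1 h₁ h₂ h₃ (hB v hv).2 (hB v' hv').2 (hB v'' hv'').2 ha hb
        · have := (hB v hv).2
          rw [Set.ncard_eq_toFinset_card'] at this
          exact this.trans' (by norm_num)
    _ ≤ 2 * #{v : V | G.dist x v = t}.toFinset := by grw [card_le_card hBN]
end

section
/- For every positive integer t and every positive even integer d there exists a finite simple graph G of maximum degree at most d such that χ(Gᵗ) ≥ (d/2)ᵗ. Moreover, if t ≥ 2 and t ≠ 3 then G can additionally be chosen to contain no triangle (girth at least 4), and if t is even then G can additionally be chosen to be bipartite. -/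
/-!
The graph lives on `ZMod t × (ZMod t → Fin (d / 2))`: a position `i` on a `t`-cycle together with
a word of length `t`, and a step from position `i` to `i + 1` may rewrite the `i`-th letter
arbitrarily, so every vertex has at most `d` neighbours. Walking once around the cycle rewrites
every letter, hence any two vertices at position `0` are joined by a walk of length `t`, and these
`(d / 2) ^ t` vertices form a clique of `Gᵗ`. Every edge moves the position by `±1`, so a triangle
forces `t ∣ 1` or `t ∣ 3`, and for even `t` the parity of the position is a proper 2-colouring.
-/

/-- The `t`-th power of a simple graph `G`: two distinct vertices are adjacent
iff they are joined in `G` by a walk of length at most `t`. -/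
def SimpleGraph.power {V : Type*} (G : SimpleGraph V) (t : ℕ) : SimpleGraph V where
  Adj u v := u ≠ v ∧ ∃ w : G.Walk u v, w.length ≤ t
  symm := ⟨by
    rintro u v ⟨huv, w, hw⟩
    exact ⟨huv.symm, w.reverse, by simpa using hw⟩⟩
  loopless := ⟨by rintro u ⟨h, -⟩; exact h rfl⟩

namespace SimpleGraph

variable {V : Type*} {G : SimpleGraph V}

lemma exists_walk_length_le_of_chain (v : ℕ → V) (n : ℕ)
    (h : ∀ s < n, v s = v (s + 1) ∨ G.Adj (v s) (v (s + 1))) :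
    ∃ w : G.Walk (v 0) (v n), w.length ≤ n := by
  induction n with
  | zero => exact ⟨.nil, le_rfl⟩
  | succ n ih =>
    obtain ⟨w, hw⟩ := ih fun s hs => h s (hs.trans n.lt_succ_self)
    rcases h n n.lt_succ_self with heq | hadj
    · exact ⟨w.copy rfl heq, by simp only [Walk.length_copy]; omega⟩
    · exact ⟨w.concat hadj, by simp only [Walk.length_concat]; omega⟩

lemma four_le_egirth_of_cliqueFree_three (h : G.CliqueFree 3) : 4 ≤ G.egirth := by
  refine le_egirth.2 fun a w hw => ?_
  by_contra! hlt
  have hlen : w.length = 3 := by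
    have := hw.three_le_length
    have : w.length < 4 := by exact_mod_cast hlt
    omega
  obtain ⟨s, hs⟩ := is3Clique_iff_exists_cycle_length_three.2 ⟨a, w, hw, hlen⟩
  exact h s hs

end SimpleGraph

lemma one_eq_zero_or_three_eq_zero_of_add_add_eq_zero {R : Type*} [CommRing R] {x y z : R}
    (hx : x = 1 ∨ x = -1) (hy : y = 1 ∨ y = -1) (hz : z = 1 ∨ z = -1) (h : x + y + z = 0) :
    (1 : R) = 0 ∨ (3 : R) = 0 := by
  rcases hx with rfl | rfl <;> rcases hy with rfl | rfl <;> rcases hz with rfl | rfl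
  all_goals first
    | exact Or.inl (by linear_combination h)
    | exact Or.inl (by linear_combination -h)
    | exact Or.inr (by linear_combination h)
    | exact Or.inr (by linear_combination -h)

open SimpleGraph

section Circular

variable (t : ℕ) (α : Type*)

def circularStep (u v : ZMod t × (ZMod t → α)) : Prop :=
  v.1 = u.1 + 1 ∧ ∀ k ≠ u.1, v.2 k = u.2 k

def circularGraph : SimpleGraph (ZMod t × (ZMod t → α)) :=
  SimpleGraph.fromRel (circularStep t α)

variable {t α}

lemma circularGraph_adj_fst {u v : ZMod t × (ZMod t → α)} (h : (circularGraph t α).Adj u v) :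
    v.1 - u.1 = 1 ∨ v.1 - u.1 = -1 :=
  h.2.imp (fun h => by rw [h.1]; ring) (fun h => by rw [h.1]; ring)

lemma circularGraph_ncard_neighborSet_le [Finite α] (u : ZMod t × (ZMod t → α)) :
    ((circularGraph t α).neighborSet u).ncard ≤ 2 * Nat.card α := by
  obtain ⟨i, x⟩ := u
  let f : α ⊕ α → ZMod t × (ZMod t → α)
    | .inl a => (i + 1, Function.update x i a)
    | .inr a => (i - 1, Function.update x (i - 1) a)
  have hsub : (circularGraph t α).neighborSet (i, x) ⊆ Set.range f := by
    rintro ⟨j, y⟩ ⟨-, ⟨hj, hy⟩ | ⟨hj, hy⟩⟩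
    · refine ⟨.inl (y i), Prod.ext hj.symm ?_⟩
      exact Function.update_eq_iff.2 ⟨rfl, fun k hk => (hy k hk).symm⟩
    · obtain rfl : j = i - 1 := eq_sub_of_add_eq hj.symm
      exact ⟨.inr (y (i - 1)), Prod.ext rfl (Function.update_eq_iff.2 ⟨rfl, hy⟩)⟩
  calc _ ≤ (Set.range f).ncard := Set.ncard_le_ncard hsub (Set.finite_range f)
    _ ≤ Nat.card (α ⊕ α) := by rw [← Nat.card_coe_set_eq]; exact Finite.card_range_le f
    _ = 2 * Nat.card α := by rw [Nat.card_sum]; ring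

lemma circularGraph_colorable_two (ht : Even t) : (circularGraph t α).Colorable 2 := by
  let c : ZMod t →+* ZMod 2 := ZMod.castHom ht.two_dvd (ZMod 2)
  refine ⟨Coloring.mk (fun u => c u.1) fun {u v} huv hc => ?_⟩
  have hdiff : c (v.1 - u.1) = 0 := by rw [map_sub, hc, sub_self]
  rcases circularGraph_adj_fst huv with h | h <;> rw [h] at hdiff <;> simp at hdiff

lemma circularGraph_cliqueFree_three (h2 : 2 ≤ t) (h3 : t ≠ 3) :
    (circularGraph t α).CliqueFree 3 := by
  classical
  intro s hs
  obtain ⟨a, b, c, hab, hac, hbc, rfl⟩ := is3Clique_iff.1 hs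
  have hsum : (b.1 - a.1) + (c.1 - b.1) + (a.1 - c.1) = 0 := by ring
  have hdvd : t ∣ 1 ∨ t ∣ 3 := by
    simpa [← ZMod.natCast_eq_zero_iff] using one_eq_zero_or_three_eq_zero_of_add_add_eq_zero
      (circularGraph_adj_fst hab) (circularGraph_adj_fst hbc)
      (circularGraph_adj_fst hac.symm) hsum
  rcases hdvd with h | h
  · exact absurd (Nat.le_of_dvd one_pos h) (by omega)
  · exact h3 ((Nat.prime_three.eq_one_or_self_of_dvd t h).resolve_left (by omega))

lemma power_circularGraph_adj_zero [NeZero t] {x y : ZMod t → α} (hxy : x ≠ y) :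
    ((circularGraph t α).power t).Adj (0, x) (0, y) := by
  refine ⟨fun h => hxy (congrArg Prod.snd h), ?_⟩
  let v : ℕ → ZMod t × (ZMod t → α) := fun n => (n, fun k => if k.val < n then y k else x k)
  have hstep : ∀ n, circularStep t α (v n) (v (n + 1)) := by
    refine fun n => ⟨by simp [v], fun k hk => ?_⟩
    have : k.val ≠ n := fun h => hk (h ▸ (ZMod.natCast_zmod_val k).symm)
    simp only [v]
    rw [if_congr (by omega : k.val < n + 1 ↔ k.val < n) rfl rfl]
  obtain ⟨w, hw⟩ := exists_walk_length_le_of_chain (G := circularGraph t α) v t fun n _ =>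
    (em _).imp_right fun hne => ⟨hne, Or.inl (hstep n)⟩
  have hv0 : v 0 = (0, x) := by simp [v]
  have hvt : v t = (0, y) := by simp [v, ZMod.val_lt]
  exact ⟨w.copy hv0 hvt, by rwa [Walk.length_copy]⟩

lemma pow_le_chromaticNumber_power_circularGraph [NeZero t] :
    ((Nat.card α ^ t : ℕ) : ℕ∞) ≤ ((circularGraph t α).power t).chromaticNumber :=
  le_chromaticNumber_of_pairwise_adj (by simp [Nat.card_fun]) (fun x => ((0 : ZMod t), x))
    fun _ _ => power_circularGraph_adj_zero

end Circular

theorem circular_construction_simple_general (t d : ℕ) (ht : 0 < t) :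
    ∃ (V : Type) (_ : Fintype V) (G : SimpleGraph V),
      (∀ v : V, {w : V | G.Adj v w}.ncard ≤ d) ∧
      (((d / 2) ^ t : ℕ) : ℕ∞) ≤ (G.power t).chromaticNumber ∧
      (2 ≤ t ∧ t ≠ 3 → 4 ≤ G.egirth) ∧
      (Even t → G.Colorable 2) := by
  have : NeZero t := ⟨ht.ne'⟩
  refine ⟨_, inferInstance, circularGraph t (Fin (d / 2)), fun u => ?_, ?_,
    fun h => four_le_egirth_of_cliqueFree_three (circularGraph_cliqueFree_three h.1 h.2),
    circularGraph_colorable_two⟩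
  · calc _ ≤ 2 * Nat.card (Fin (d / 2)) := circularGraph_ncard_neighborSet_le u
      _ ≤ d := by rw [Nat.card_fin]; omega
  · simpa only [Nat.card_fin] using
      pow_le_chromaticNumber_power_circularGraph (t := t) (α := Fin (d / 2))

/-- For every positive `t` and positive even `d` there is a finite simple graph `G` of
maximum degree at most `d` with `χ(Gᵗ) ≥ (d/2)ᵗ`; moreover `G` can be chosen triangle-free
(girth at least `4`) whenever `t ≥ 2` and `t ≠ 3`, and bipartite whenever `t` is even. -/
theorem circular_construction_simple (t d : ℕ) (ht : 0 < t) (hd : 0 < d) (hde : Even d) :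
    ∃ (V : Type) (_ : Fintype V) (G : SimpleGraph V),
      (∀ v : V, {w : V | G.Adj v w}.ncard ≤ d) ∧
      (((d / 2) ^ t : ℕ) : ℕ∞) ≤ (G.power t).chromaticNumber ∧
      (2 ≤ t ∧ t ≠ 3 → 4 ≤ G.egirth) ∧
      (Even t → G.Colorable 2) :=
  circular_construction_simple_general t d ht
end

section
/- Let H be a finite bipartite simple graph with parts A = {a₁, …, a_n} and B = {b₁, …, b_n} such that: H is regular of degree Δ; H has girth at least γ; for every a ∈ A and every b ∈ B there is a walk in H of length at most τ from a to b; and a_i is adjacent to b_i in H for every i ∈ {1, …, n} (so {a_ib_i} is a perfect matching). Define the matching contraction μ(H) to be the simple graph on vertex set {1, …, n} in which distinct i and j are adjacent if and only if a_i is adjacent to b_j in H or a_j is adjacent to b_i in H. Then μ(H) has maximum degree at most 2Δ − 2; twice the girth of μ(H) is at least the girth of H (so μ(H) has girth at least γ/2); μ(H) has n vertices; and between every two distinct vertices of μ(H) there is a walk in μ(H) of length at most τ. -/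
/-- The matching contraction of a bipartite graph `H` whose parts are enumerated as
`a 1, …, a n` and `b 1, …, b n`: vertices `i ≠ j` are adjacent iff `a i` is adjacent to
`b j` in `H` or `a j` is adjacent to `b i` in `H`. -/
def matchingContraction {W : Type*} (H : SimpleGraph W) {n : ℕ} (a b : Fin n → W) :
    SimpleGraph (Fin n) where
  Adj i j := i ≠ j ∧ (H.Adj (a i) (b j) ∨ H.Adj (a j) (b i))
  symm := ⟨by rintro i j ⟨hij, h⟩; exact ⟨hij.symm, h.symm⟩⟩
  loopless := ⟨by rintro i ⟨h, -⟩; exact h rfl⟩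

/-! A step `i — k` of `μ(H)` lifts to the path `a i, b k, a k` or `a i, b i, a k` of `H`, so a
cycle of `μ(H)` lifts to a closed walk of twice its length. Its edge `a i b k` (resp. `b i a k`)
is traversed only once, since the lift of the rest of the cycle only uses matching edges and
edges `a u b v` with `u — v` on the rest of the cycle; removing it leaves a walk between its
ends, which shortens to a path closing up a cycle of `H`. Conversely, sending `a k` and `b k`
to `k` maps every edge of `H` to an edge or a vertex of `μ(H)`, so walks of `H` project to walks
of `μ(H)` that are no longer. -/

namespace SimpleGraph

variable {V V' : Type*} {G : SimpleGraph V} {G' : SimpleGraph V'}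

lemma egirth_le_length_add_one {u v : V} (h : G.Adj u v) (p : G.Walk v u)
    (hp : s(u, v) ∉ p.edges) : G.egirth ≤ p.length + 1 := by
  classical
  have hcycle : (Walk.cons h p.bypass).IsCycle :=
    (Walk.cons_isCycle_iff _ h).mpr
      ⟨p.bypass_isPath, fun he => hp (p.edges_bypass_subset_edges he)⟩
  calc G.egirth ≤ (Walk.cons h p.bypass).length := egirth_le_length hcycle
    _ ≤ p.length + 1 := by
      rw [Walk.length_cons]; exact_mod_cast Nat.succ_le_succ p.length_bypass_le_length

lemma Walk.exists_walk_length_le_of_adj_imp (f : V → V')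
    (hf : ∀ u v, G.Adj u v → f u = f v ∨ G'.Adj (f u) (f v)) {u v : V} (p : G.Walk u v) :
    ∃ q : G'.Walk (f u) (f v), q.length ≤ p.length := by
  induction p with
  | nil => exact ⟨.nil, le_rfl⟩
  | @cons u w v h p ih =>
    obtain ⟨q, hq⟩ := ih
    rcases hf u w h with heq | hadj
    · exact ⟨q.copy heq.symm rfl, by simp only [Walk.length_cons, Walk.length_copy]; omega⟩
    · exact ⟨.cons hadj q, by simp only [Walk.length_cons]; omega⟩

end SimpleGraph

open SimpleGraph

section MatchingContraction

variable {W : Type*} {H : SimpleGraph W} {n : ℕ} {a b : Fin n → W}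

lemma matchingContraction_eq_or_adj {i j : Fin n} (h : H.Adj (a i) (b j)) :
    i = j ∨ (matchingContraction H a b).Adj i j := by
  by_cases hij : i = j
  · exact .inl hij
  · exact .inr ⟨hij, .inl h⟩

lemma ncard_adj_matchingContraction_le [Finite W] {Δ : ℕ}
    (ha : Function.Injective a) (hb : Function.Injective b)
    (hreg : ∀ v : W, {w : W | H.Adj v w}.ncard = Δ) (hm : ∀ i, H.Adj (a i) (b i)) (i : Fin n) :
    {j : Fin n | (matchingContraction H a b).Adj i j}.ncard ≤ 2 * Δ - 2 := by
  have hout : ({j | H.Adj (a i) (b j)} \ {i}).ncard ≤ Δ - 1 := by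
    rw [Set.ncard_sdiff_singleton_of_mem (s := {j | H.Adj (a i) (b j)}) (hm i), ← hreg (a i)]
    exact Nat.sub_le_sub_right
      (Set.ncard_le_ncard_of_injOn b (fun _ h => h) hb.injOn (Set.toFinite _)) 1
  have hin : ({j | H.Adj (a j) (b i)} \ {i}).ncard ≤ Δ - 1 := by
    rw [Set.ncard_sdiff_singleton_of_mem (s := {j | H.Adj (a j) (b i)}) (hm i), ← hreg (b i)]
    exact Nat.sub_le_sub_right
      (Set.ncard_le_ncard_of_injOn a (fun _ h => h.symm) ha.injOn (Set.toFinite _)) 1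
  have hsub : {j | (matchingContraction H a b).Adj i j} ⊆
      ({j | H.Adj (a i) (b j)} \ {i}) ∪ ({j | H.Adj (a j) (b i)} \ {i}) := by
    rintro j ⟨hij, h | h⟩
    · exact .inl ⟨h, Ne.symm hij⟩
    · exact .inr ⟨h, Ne.symm hij⟩
  calc _ ≤ _ := Set.ncard_le_ncard hsub (Set.toFinite _)
    _ ≤ _ := Set.ncard_union_le _ _
    _ ≤ 2 * Δ - 2 := by omega

open scoped Classical in
noncomputable def liftWalk (hm : ∀ i, H.Adj (a i) (b i)) :
    ∀ {i j : Fin n}, (matchingContraction H a b).Walk i j → H.Walk (a i) (a j)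
  | _, _, .nil => .nil
  | i, _, .cons (v := k) h p =>
    if hik : H.Adj (a i) (b k) then .cons hik (.cons (hm k).symm (liftWalk hm p))
    else .cons (hm i) (.cons (h.2.resolve_left hik).symm (liftWalk hm p))

lemma length_liftWalk (hm : ∀ i, H.Adj (a i) (b i)) {i j : Fin n}
    (p : (matchingContraction H a b).Walk i j) :
    (liftWalk hm p).length = 2 * p.length := by
  induction p with
  | nil => rfl
  | cons h p ih =>
    unfold liftWalk
    split_ifs <;> simp only [Walk.length_cons, ih] <;> ring

lemma mem_edges_liftWalk (hm : ∀ i, H.Adj (a i) (b i)) {i j : Fin n}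
    {p : (matchingContraction H a b).Walk i j} {e : Sym2 W} (he : e ∈ (liftWalk hm p).edges) :
    ∃ u v, e = s(a u, b v) ∧ (u = v ∨ s(u, v) ∈ p.edges) := by
  induction p with
  | nil => simp [liftWalk] at he
  | @cons i k j h p ih =>
    unfold liftWalk at he
    split_ifs at he with hik
    all_goals
      simp only [Walk.edges_cons, List.mem_cons] at he
      rcases he with rfl | rfl | he
    · exact ⟨i, k, rfl, .inr (by simp)⟩
    · exact ⟨k, k, Sym2.eq_swap, .inl rfl⟩
    · obtain ⟨u, v, rfl, huv⟩ := ih he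
      exact ⟨u, v, rfl, huv.imp_right (by simp +contextual)⟩
    · exact ⟨i, i, rfl, .inl rfl⟩
    · exact ⟨k, i, Sym2.eq_swap, .inr (by simp [Sym2.eq_swap])⟩
    · obtain ⟨u, v, rfl, huv⟩ := ih he
      exact ⟨u, v, rfl, huv.imp_right (by simp +contextual)⟩

lemma mk_eq_mk_iff_of_injective_of_disjoint (ha : Function.Injective a)
    (hb : Function.Injective b) (hdisj : Disjoint (Set.range a) (Set.range b))
    {u v u' v' : Fin n} : s(a u, b v) = s(a u', b v') ↔ u = u' ∧ v = v' := by
  refine ⟨fun h => ?_, by rintro ⟨rfl, rfl⟩; rfl⟩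
  rcases Sym2.eq_iff.mp h with ⟨hu, hv⟩ | ⟨hab, -⟩
  · exact ⟨ha hu, hb hv⟩
  · exact absurd hab (hdisj.ne_of_mem ⟨u, rfl⟩ ⟨v', rfl⟩)

lemma not_mem_edges_liftWalk (hm : ∀ i, H.Adj (a i) (b i))
    (ha : Function.Injective a) (hb : Function.Injective b)
    (hdisj : Disjoint (Set.range a) (Set.range b)) {i j u v : Fin n}
    {p : (matchingContraction H a b).Walk i j} (huv : u ≠ v) (hp : s(u, v) ∉ p.edges) :
    s(a u, b v) ∉ (liftWalk hm p).edges := by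
  intro he
  obtain ⟨u', v', heq, huv'⟩ := mem_edges_liftWalk hm he
  obtain ⟨rfl, rfl⟩ := (mk_eq_mk_iff_of_injective_of_disjoint ha hb hdisj).mp heq
  exact huv'.elim huv hp

lemma egirth_le_two_mul_length_of_isCycle (hm : ∀ i, H.Adj (a i) (b i))
    (ha : Function.Injective a) (hb : Function.Injective b)
    (hdisj : Disjoint (Set.range a) (Set.range b)) {i : Fin n}
    {c : (matchingContraction H a b).Walk i i} (hc : c.IsCycle) :
    H.egirth ≤ 2 * c.length := by
  cases c with
  | nil => exact absurd rfl hc.ne_nil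
  | @cons _ k _ h p =>
    obtain ⟨-, hp⟩ := (Walk.cons_isCycle_iff p h).mp hc
    have hlen : 2 * ((Walk.cons h p).length : ℕ∞) = (liftWalk hm p).length + 1 + 1 := by
      rw [length_liftWalk, Walk.length_cons]; push_cast; ring
    rw [hlen]
    by_cases hik : H.Adj (a i) (b k)
    · have hq : s(a i, b k) ∉ (Walk.cons (hm k).symm (liftWalk hm p)).edges := by
        simp only [Walk.edges_cons, List.mem_cons, not_or]
        refine ⟨fun heq => h.1 ?_, not_mem_edges_liftWalk hm ha hb hdisj h.1 hp⟩
        rw [Sym2.eq_swap (a := b k), mk_eq_mk_iff_of_injective_of_disjoint ha hb hdisj] at heq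
        exact heq.1
      calc H.egirth ≤ _ := egirth_le_length_add_one hik _ hq
        _ = _ := by rw [Walk.length_cons]; push_cast; ring
    · have hki : H.Adj (a k) (b i) := h.2.resolve_left hik
      have hq : s(b i, a k) ∉ ((liftWalk hm p).concat (hm i)).edges := by
        rw [Walk.edges_concat, List.concat_eq_append, List.mem_append, Sym2.eq_swap]
        refine not_or.mpr ⟨not_mem_edges_liftWalk hm ha hb hdisj h.1.symm
          (by rwa [Sym2.eq_swap]), fun heq => h.1 ?_⟩
        rw [List.mem_singleton, mk_eq_mk_iff_of_injective_of_disjoint ha hb hdisj] at heq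
        exact heq.1.symm
      calc H.egirth ≤ _ := egirth_le_length_add_one hki.symm _ hq
        _ = _ := by rw [Walk.length_concat]; push_cast; ring

lemma egirth_le_two_mul_egirth_matchingContraction (hm : ∀ i, H.Adj (a i) (b i))
    (ha : Function.Injective a) (hb : Function.Injective b)
    (hdisj : Disjoint (Set.range a) (Set.range b)) :
    H.egirth ≤ 2 * (matchingContraction H a b).egirth := by
  by_cases hacyc : (matchingContraction H a b).IsAcyclic
  · simp [egirth_eq_top.mpr hacyc]
  · obtain ⟨i, c, hc, hlen⟩ := exists_egirth_eq_length.mpr hacyc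
    rw [hlen]
    exact egirth_le_two_mul_length_of_isCycle hm ha hb hdisj hc

lemma exists_walk_matchingContraction_length_le (ha : Function.Injective a)
    (hb : Function.Injective b) (hdisj : Disjoint (Set.range a) (Set.range b))
    (hcover : ∀ w : W, w ∈ Set.range a ∨ w ∈ Set.range b)
    (hbip : ∀ u v : W, H.Adj u v →
      (u ∈ Set.range a ∧ v ∈ Set.range b) ∨ (u ∈ Set.range b ∧ v ∈ Set.range a))
    {i j : Fin n} (p : H.Walk (a i) (b j)) :
    ∃ q : (matchingContraction H a b).Walk i j, q.length ≤ p.length := by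
  have hindex (w : W) : ∃ k, a k = w ∨ b k = w := by
    rcases hcover w with ⟨k, hk⟩ | ⟨k, hk⟩
    exacts [⟨k, .inl hk⟩, ⟨k, .inr hk⟩]
  choose idx hidx using hindex
  have hidx_a (k : Fin n) : idx (a k) = k :=
    (hidx (a k)).elim (fun h => ha h)
      (fun h => absurd h (hdisj.ne_of_mem ⟨k, rfl⟩ ⟨_, rfl⟩).symm)
  have hidx_b (k : Fin n) : idx (b k) = k :=
    (hidx (b k)).elim (fun h => absurd h (hdisj.ne_of_mem ⟨_, rfl⟩ ⟨k, rfl⟩))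
      (fun h => hb h)
  have hf (u v : W) (huv : H.Adj u v) :
      idx u = idx v ∨ (matchingContraction H a b).Adj (idx u) (idx v) := by
    rcases hbip u v huv with ⟨⟨k, rfl⟩, ⟨l, rfl⟩⟩ | ⟨⟨k, rfl⟩, ⟨l, rfl⟩⟩
    · rw [hidx_a, hidx_b]
      exact matchingContraction_eq_or_adj huv
    · rw [hidx_a, hidx_b]
      exact (matchingContraction_eq_or_adj huv.symm).imp Eq.symm Adj.symm
  obtain ⟨q, hq⟩ := p.exists_walk_length_le_of_adj_imp idx hf
  exact ⟨q.copy (hidx_a i) (hidx_b j), by rwa [Walk.length_copy]⟩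

end MatchingContraction

theorem matchingContraction_properties_general
    (W : Type) [Fintype W] (H : SimpleGraph W) (n Δ τ : ℕ)
    (a b : Fin n → W)
    (ha : Function.Injective a) (hb : Function.Injective b)
    (hdisj : Disjoint (Set.range a) (Set.range b))
    (hcover : ∀ w : W, w ∈ Set.range a ∨ w ∈ Set.range b)
    (hbip : ∀ u v : W, H.Adj u v →
      (u ∈ Set.range a ∧ v ∈ Set.range b) ∨ (u ∈ Set.range b ∧ v ∈ Set.range a))
    (hreg : ∀ v : W, {w : W | H.Adj v w}.ncard = Δ)
    (hwalk : ∀ i j : Fin n, ∃ w : H.Walk (a i) (b j), w.length ≤ τ)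
    (hmatch : ∀ i : Fin n, H.Adj (a i) (b i)) :
    (∀ i : Fin n, {j : Fin n | (matchingContraction H a b).Adj i j}.ncard ≤ 2 * Δ - 2) ∧
    H.egirth ≤ 2 * (matchingContraction H a b).egirth ∧
    Fintype.card (Fin n) = n ∧
    (∀ i j : Fin n, i ≠ j →
      ∃ w : (matchingContraction H a b).Walk i j, w.length ≤ τ) := by
  refine ⟨ncard_adj_matchingContraction_le ha hb hreg hmatch,
    egirth_le_two_mul_egirth_matchingContraction hmatch ha hb hdisj, Fintype.card_fin n,
    fun i j _ => ?_⟩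
  obtain ⟨p, hp⟩ := hwalk i j
  obtain ⟨q, hq⟩ := exists_walk_matchingContraction_length_le ha hb hdisj hcover hbip p
  exact ⟨q, hq.trans hp⟩

/-- Matching contraction of a good conduit: if `H` is a bipartite graph with parts
`{a 1, …, a n}` and `{b 1, …, b n}`, regular of degree `Δ`, of girth at least `γ`, with a
walk of length at most `τ` between any `a i` and `b j`, and with `a i b i` a perfect
matching, then `μ(H)` has maximum degree at most `2Δ - 2`, twice its girth is at least the
girth of `H`, it has `n` vertices, and any two distinct vertices of `μ(H)` are joined by a
walk of length at most `τ`. -/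
theorem matchingContraction_properties
    (W : Type) [Fintype W] (H : SimpleGraph W) (n Δ τ : ℕ) (γ : ℕ∞)
    (a b : Fin n → W)
    (ha : Function.Injective a) (hb : Function.Injective b)
    (hdisj : Disjoint (Set.range a) (Set.range b))
    (hcover : ∀ w : W, w ∈ Set.range a ∨ w ∈ Set.range b)
    (hbip : ∀ u v : W, H.Adj u v →
      (u ∈ Set.range a ∧ v ∈ Set.range b) ∨ (u ∈ Set.range b ∧ v ∈ Set.range a))
    (hreg : ∀ v : W, {w : W | H.Adj v w}.ncard = Δ)
    (hgirth : γ ≤ H.egirth)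
    (hwalk : ∀ i j : Fin n, ∃ w : H.Walk (a i) (b j), w.length ≤ τ)
    (hmatch : ∀ i : Fin n, H.Adj (a i) (b i)) :
    (∀ i : Fin n, {j : Fin n | (matchingContraction H a b).Adj i j}.ncard ≤ 2 * Δ - 2) ∧
    H.egirth ≤ 2 * (matchingContraction H a b).egirth ∧
    Fintype.card (Fin n) = n ∧
    (∀ i j : Fin n, i ≠ j →
      ∃ w : (matchingContraction H a b).Walk i j, w.length ≤ τ) :=
  matchingContraction_properties_general W H n Δ τ a b ha hb hdisj hcover hbip hreg hwalk hmatch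
end
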